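/- arXiv:0709.0064 — 11 statements merged into one kernel-verified Lean document; each statement's English description precedes it below -/
import Mathlib

section
/- The number of conjugacy classes of G contained in the coset Hx equals the number of conjugacy classes of G contained in H that do not split under the conjugation action of H (equivalently, classes of elements h in H with H·C_G(h) = G). -/
/-!
Restricted to a conjugation-invariant set `S`, the class equation reads
`#{classes in S} * |G| = ∑_{g ∈ S} |C_G(g)|`, so it suffices to compare these sums for the coset
`Hx` and for the set of non-splitting `h ∈ H`. Whenever `H C_G(g) = G`, the centralizer maps onto
`G/H` and meets every coset of `H` in `|C_H(g)|` elements. For `g ∈ Hx` this holds because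
`g ∈ C_G(g)`, so `|C_G(g)| = |G/H| |C_H(g)|`; for `h ∈ H`, since `Hx` generates `G/H`, `C_G(h)`
meets `Hx` exactly when `H C_G(h) = G`, and then in `|C_H(h)| = |C_G(h)| / |G/H|` elements.
Counting the commuting pairs in `H × Hx` in both orders then shows that the two sums agree.
-/

open Finset Subgroup QuotientGroup Pointwise

section

variable {G : Type*} [Group G]

theorem ConjClasses.card_carrier_mul_card_centralizer [Finite G] (g : G) :
    Nat.card (ConjClasses.mk g).carrier * Nat.card (centralizer {g}) = Nat.card G := by
  rw [nat_card_centralizer_nat_card_stabilizer, mul_comm, ← ConjAct.orbit_eq_carrier_conjClasses,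
    Nat.card_coe_set_eq, ← MulAction.index_stabilizer, card_mul_index]
  rfl

theorem ConjClasses.sum_card_centralizer [Fintype G] (C : ConjClasses G) [Fintype C.carrier] :
    ∑ g ∈ C.carrier.toFinset, Nat.card (centralizer {g}) = Nat.card G := by
  obtain ⟨g, rfl⟩ := C.exists_rep
  have : Nonempty (ConjClasses.mk g).carrier := ⟨⟨g, ConjClasses.mem_carrier_mk⟩⟩
  have hconst : ∀ h ∈ (ConjClasses.mk g).carrier.toFinset,
      Nat.card (centralizer {h}) = Nat.card G / Nat.card (ConjClasses.mk g).carrier := by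
    intro h hh
    rw [Set.mem_toFinset, ConjClasses.mem_carrier_iff_mk_eq] at hh
    rw [← ConjClasses.card_carrier_mul_card_centralizer h, hh,
      Nat.mul_div_cancel_left _ Nat.card_pos]
  rw [sum_congr rfl hconst, sum_const, smul_eq_mul, Set.toFinset_card, ← Nat.card_eq_fintype_card,
    Nat.mul_div_cancel' ⟨_, (ConjClasses.card_carrier_mul_card_centralizer g).symm⟩]

theorem card_conjClasses_subset_mul_card [Fintype G] (S : Set G) [DecidablePred (· ∈ S)]
    (hS : ∀ g ∈ S, ∀ a : G, a * g * a⁻¹ ∈ S) :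
    Nat.card {C : ConjClasses G // C.carrier ⊆ S} * Nat.card G =
      ∑ g with g ∈ S, Nat.card (centralizer {g}) := by
  classical
  have hclass : ∀ C : ConjClasses G, (∑ g with g ∈ S ∧ ConjClasses.mk g = C,
      Nat.card (centralizer {g})) = if C.carrier ⊆ S then Nat.card G else 0 := by
    intro C
    split_ifs with hCS
    · rw [← C.sum_card_centralizer]
      congr 1
      ext g
      simp only [mem_filter, mem_univ, true_and, Set.mem_toFinset,
        ← ConjClasses.mem_carrier_iff_mk_eq]
      exact ⟨And.right, fun hg => ⟨hCS hg, hg⟩⟩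
    · refine sum_eq_zero fun g hg => absurd ?_ hCS
      simp only [mem_filter, mem_univ, true_and] at hg
      obtain ⟨hgS, rfl⟩ := hg
      rintro h hh
      obtain ⟨a, rfl⟩ := isConj_iff.1 (ConjClasses.mk_eq_mk_iff_isConj.1
        (ConjClasses.mem_carrier_iff_mk_eq.1 hh).symm)
      exact hS g hgS a
  rw [← sum_fiberwise_of_maps_to (t := univ) (g := ConjClasses.mk) (fun _ _ => mem_univ _)]
  simp only [filter_filter, hclass, sum_ite, sum_const_zero, add_zero, sum_const, smul_eq_mul]
  rw [Nat.card_eq_fintype_card, Fintype.card_subtype]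

theorem Subgroup.centralizer_conj (a h : G) :
    centralizer {a * h * a⁻¹} = MulAut.conj a • centralizer {h} := by
  ext g
  rw [mem_pointwise_smul_iff_inv_smul_mem, mem_centralizer_singleton_iff,
    mem_centralizer_singleton_iff, ← commute_iff_eq, ← commute_iff_eq,
    ← Commute.conj_iff a⁻¹]
  simp [mul_assoc]

section Quotient

variable {H : Subgroup G} [H.Normal]

theorem QuotientGroup.mk_conj [IsMulCommutative (G ⧸ H)] (a g : G) :
    ((a * g * a⁻¹ : G) : G ⧸ H) = g := by
  rw [mk_mul, mk_mul, mk_inv, mul_comm' (a : G ⧸ H), mul_inv_cancel_right]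

theorem sup_centralizer_conj_eq_top {h : G} (hh : H ⊔ centralizer {h} = ⊤) (a : G) :
    H ⊔ centralizer {a * h * a⁻¹} = ⊤ := by
  rw [centralizer_conj, ← Normal.conj_smul_eq_self a H, ← smul_sup, hh, eq_top_iff,
    subset_pointwise_smul_iff]
  exact le_top

theorem QuotientGroup.sup_eq_top_iff_map_mk'_eq_top {K : Subgroup G} :
    H ⊔ K = ⊤ ↔ K.map (mk' H) = ⊤ := by
  rw [← (comap_injective (mk'_surjective H)).eq_iff, comap_map_eq, ker_mk', comap_top, sup_comm]

theorem QuotientGroup.sup_eq_top_iff_exists_mk_eq {x : G ⧸ H} (hgen : zpowers x = ⊤)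
    {K : Subgroup G} :
    H ⊔ K = ⊤ ↔ ∃ c ∈ K, (c : G ⧸ H) = x := by
  rw [sup_eq_top_iff_map_mk'_eq_top, eq_top_iff, ← hgen, zpowers_le]
  exact mem_map

theorem card_quotient_mul_card_fiber [Finite G] {K : Subgroup G} (hK : H ⊔ K = ⊤)
    (q : G ⧸ H) :
    Nat.card (G ⧸ H) * Nat.card {k : K // (k : G ⧸ H) = q} = Nat.card K := by
  set f : K →* G ⧸ H := (mk' H).comp K.subtype
  have hf : f.range = ⊤ := by
    rw [MonoidHom.range_comp, range_subtype, ← sup_eq_top_iff_map_mk'_eq_top, hK]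
  have hfiber : Nat.card {k : K // (k : G ⧸ H) = q} = Nat.card f.ker :=
    Nat.card_congr (f.fiberEquivKerOfSurjective (MonoidHom.range_eq_top.1 hf) q)
  rw [hfiber, mul_comm, ← card_top (G := G ⧸ H), ← hf, ← index_ker, card_mul_index]

theorem card_quotient_mul_card_filter [Fintype G] {K : Subgroup G} [DecidablePred (· ∈ K)]
    [DecidableEq (G ⧸ H)] (hK : H ⊔ K = ⊤) (q : G ⧸ H) :
    Nat.card (G ⧸ H) * #{g | g ∈ K ∧ (g : G ⧸ H) = q} = Nat.card K := by
  rw [← card_quotient_mul_card_fiber hK q, ← Fintype.card_subtype,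
    ← Nat.card_eq_fintype_card,
    Nat.card_congr (Equiv.subtypeSubtypeEquivSubtypeInter (· ∈ K) fun g => (g : G ⧸ H) = q)]

theorem sum_card_centralizer_coset [Fintype G] [DecidablePred (· ∈ H)] [DecidableEq (G ⧸ H)]
    [DecidablePred fun h : G => H ⊔ centralizer {h} = ⊤] {x : G ⧸ H}
    (hgen : zpowers x = ⊤) :
    ∑ g : G with ((g : G) : G ⧸ H) = x, Nat.card (centralizer {g}) =
      ∑ h with h ∈ H ∧ H ⊔ centralizer {h} = ⊤, Nat.card (centralizer {h}) := by
  classical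
  set A : Finset G := {g | ((g : G) : G ⧸ H) = x}
  set B : Finset G := {h | h ∈ H}
  calc ∑ g ∈ A, Nat.card (centralizer {g})
      = ∑ g ∈ A, Nat.card (G ⧸ H) * #{h ∈ B | Commute h g} := by
        refine sum_congr rfl fun g hg => ?_
        have hgx : (g : G ⧸ H) = x := (mem_filter.1 hg).2
        rw [← card_quotient_mul_card_filter ((sup_eq_top_iff_exists_mk_eq hgen).2
          ⟨g, mem_centralizer_singleton_iff.2 rfl, hgx⟩) 1, filter_filter]
        congr 2
        ext h
        simp only [mem_filter, mem_univ, true_and, mem_centralizer_singleton_iff,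
          QuotientGroup.eq_one_iff, commute_iff_eq]
        exact and_comm
    _ = Nat.card (G ⧸ H) * ∑ h ∈ B, #{g ∈ A | Commute h g} := by
        rw [← mul_sum]
        exact congrArg _
          (sum_card_bipartiteAbove_eq_sum_card_bipartiteBelow (r := fun g h => Commute h g))
    _ = ∑ h ∈ B, if H ⊔ centralizer {h} = ⊤ then Nat.card (centralizer {h}) else 0 := by
        rw [mul_sum]
        refine sum_congr rfl fun h _ => ?_
        split_ifs with htop
        · rw [← card_quotient_mul_card_filter htop x, filter_filter]
          congr 2
          ext g
          simp only [mem_filter, mem_univ, true_and, mem_centralizer_singleton_iff, commute_iff_eq]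
          exact and_comm.trans (and_congr_left' eq_comm)
        · rw [sup_eq_top_iff_exists_mk_eq hgen] at htop
          rw [card_eq_zero.2 (filter_eq_empty_iff.2 fun g hg hgh =>
            htop ⟨g, mem_centralizer_singleton_iff.2 hgh.symm, (mem_filter.1 hg).2⟩), mul_zero]
    _ = _ := by rw [← sum_filter, filter_filter]

end Quotient

end

/-- Lemma 2 (principal lemma): if the coset `Hx` generates the cyclic quotient `G/H`,
then the number of conjugacy classes of `G` contained in `Hx` equals the number of
conjugacy classes of `G` contained in `H` whose centralizing subgroup `H·C_G(h)` is
all of `G` (equivalently, which do not split under conjugation by `H`). -/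
theorem stmt0 {G : Type*} [Group G] [Finite G] (H : Subgroup G) [H.Normal]
    (hcyc : IsCyclic (G ⧸ H)) (x : G)
    (hgen : Subgroup.zpowers (QuotientGroup.mk x : G ⧸ H) = ⊤) :
    Nat.card {C : ConjClasses G //
        C.carrier ⊆ {g : G | (QuotientGroup.mk g : G ⧸ H) = QuotientGroup.mk x}} =
    Nat.card {C : ConjClasses G //
        C.carrier ⊆ (H : Set G) ∧
        ∀ g ∈ C.carrier, H ⊔ Subgroup.centralizer {g} = ⊤} := by
  classical
  have := Fintype.ofFinite G
  have hnonsplit : Nat.card {C : ConjClasses G //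
        C.carrier ⊆ (H : Set G) ∧ ∀ g ∈ C.carrier, H ⊔ centralizer {g} = ⊤} =
      Nat.card {C : ConjClasses G //
        C.carrier ⊆ (H : Set G) ∩ {h | H ⊔ centralizer {h} = ⊤}} :=
    Nat.card_congr (Equiv.subtypeEquivRight fun C => Set.subset_inter_iff.symm)
  rw [hnonsplit]
  refine Nat.eq_of_mul_eq_mul_right (Nat.card_pos (α := G)) ?_
  rw [card_conjClasses_subset_mul_card {g : G | (g : G ⧸ H) = x}
      fun g hg a => (mk_conj a g).trans hg,
    card_conjClasses_subset_mul_card ((H : Set G) ∩ {h | H ⊔ centralizer {h} = ⊤})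
      fun h hh a => ⟨Normal.conj_mem ‹_› h hh.1 a, sup_centralizer_conj_eq_top hh.2 a⟩]
  exact sum_card_centralizer_coset hgen
end

section
/- The sum over elements h in H with HC_G(h) = G of 1/|h^G| equals (1/|H|) times the sum over h in H of |C_G(h) ∩ Hx|, where Hx is any generating coset of G/H. -/
/-!
If `H·C_G(h) = G`, the image of `C_G(h)` in `G/H` is everything, so it contains the generator `Hx`
and `C_G(h) ∩ Hx` is a coset of `H ∩ C_G(h)`, a subgroup of index `|G : H|` in `C_G(h)`.
Orbit–stabilizer then gives `|C_G(h) ∩ Hx| = |H| / |h^G|`. Otherwise the image of `C_G(h)` is a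
proper subgroup of `G/H`, which cannot contain the generator `Hx`, and `C_G(h) ∩ Hx` is empty.
-/

namespace Subgroup

open QuotientGroup
open scoped Pointwise

variable {G : Type*} [Group G]

theorem nat_card_conjugatesOf_mul_nat_card_centralizer (g : G) :
    Nat.card (conjugatesOf g) * Nat.card (centralizer {g}) = Nat.card G := by
  have horbit : (MulAction.orbit (ConjAct G) g).ncard = Nat.card (conjugatesOf g) := by
    rw [ConjAct.orbit_eq_carrier_conjClasses, ← Nat.card_coe_set_eq]
    rfl
  rw [nat_card_centralizer_nat_card_stabilizer, ← horbit, ← MulAction.index_stabilizer, mul_comm]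
  exact card_mul_index _

theorem nat_card_inf_mul_index_of_sup_eq_top (N K : Subgroup G) [N.Normal] (hNK : N ⊔ K = ⊤) :
    Nat.card (N ⊓ K : Subgroup G) * N.index = Nat.card K := by
  have hrel : N.relIndex K = N.index := by
    rw [← relIndex_sup_right, sup_comm, hNK, relIndex_top_right]
  rw [← hrel, ← inf_relIndex_right, ← relIndex_bot_left, ← relIndex_bot_left]
  exact relIndex_mul_relIndex _ _ _ bot_le inf_le_right

theorem sup_eq_top_iff_map_mk'_eq_top (N K : Subgroup G) [N.Normal] :
    N ⊔ K = ⊤ ↔ K.map (mk' N) = ⊤ := by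
  rw [← comap_map_mk', ← comap_top (mk' N), (comap_injective (mk'_surjective N)).eq_iff]

theorem sup_eq_top_iff_exists_mk_eq {N : Subgroup G} [N.Normal] {x : G}
    (hx : zpowers (x : G ⧸ N) = ⊤) (K : Subgroup G) :
    N ⊔ K = ⊤ ↔ ∃ g ∈ K, (g : G ⧸ N) = x := by
  rw [sup_eq_top_iff_map_mk'_eq_top, ← top_le_iff, ← hx, zpowers_le]
  rfl

theorem setOf_mem_and_mk_eq_eq_smul (N K : Subgroup G) [N.Normal] {c : G} (hc : c ∈ K) :
    {g : G | g ∈ K ∧ (g : G ⧸ N) = c} = c • ((N ⊓ K : Subgroup G) : Set G) := by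
  ext g
  rw [Set.mem_smul_set_iff_inv_smul_mem, smul_eq_mul, SetLike.mem_coe, mem_inf,
    ← QuotientGroup.eq, K.mul_mem_cancel_left (K.inv_mem hc)]
  exact and_comm.trans (and_congr_left' eq_comm)

theorem nat_card_setOf_mem_and_mk_eq (N K : Subgroup G) [N.Normal] {c : G} (hc : c ∈ K) :
    Nat.card {g : G | g ∈ K ∧ (g : G ⧸ N) = c} = Nat.card (N ⊓ K : Subgroup G) := by
  rw [setOf_mem_and_mk_eq_eq_smul N K hc, Set.natCard_smul_set]
  rfl

theorem nat_card_conjugatesOf_mul_nat_card_centralizer_coset [Finite G] {N : Subgroup G}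
    [N.Normal] {g c : G} (hc : c ∈ centralizer {g}) (hsup : N ⊔ centralizer {g} = ⊤) :
    Nat.card (conjugatesOf g) * Nat.card {y : G | y ∈ centralizer {g} ∧ (y : G ⧸ N) = c} =
      Nat.card N := by
  refine Nat.eq_of_mul_eq_mul_right (Nat.pos_of_ne_zero (index_ne_zero_of_finite (H := N))) ?_
  calc Nat.card (conjugatesOf g) * Nat.card {y : G | y ∈ centralizer {g} ∧ (y : G ⧸ N) = c}
          * N.index
      = Nat.card (conjugatesOf g) * (Nat.card (N ⊓ centralizer {g} : Subgroup G) * N.index) := by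
        rw [nat_card_setOf_mem_and_mk_eq N _ hc, mul_assoc]
    _ = Nat.card G := by
        rw [nat_card_inf_mul_index_of_sup_eq_top N _ hsup,
          nat_card_conjugatesOf_mul_nat_card_centralizer]
    _ = Nat.card N * N.index := (card_mul_index N).symm

end Subgroup

theorem stmt1_general {G : Type*} [Group G] [Finite G] (H : Subgroup G) [H.Normal]
    (x : G)
    (hgen : Subgroup.zpowers (QuotientGroup.mk x : G ⧸ H) = ⊤) :
    (∑ᶠ h ∈ {h : G | h ∈ H ∧ H ⊔ Subgroup.centralizer {h} = ⊤},
        (1 : ℚ) / Nat.card (conjugatesOf h)) =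
    (1 / Nat.card H) *
      ∑ᶠ h ∈ (H : Set G),
        (Nat.card {g : G | g ∈ Subgroup.centralizer {h} ∧
            (QuotientGroup.mk g : G ⧸ H) = QuotientGroup.mk x} : ℚ) := by
  have hsup_iff (h : G) : H ⊔ Subgroup.centralizer {h} = ⊤ ↔
      {g : G | g ∈ Subgroup.centralizer {h} ∧ (g : G ⧸ H) = x}.Nonempty :=
    Subgroup.sup_eq_top_iff_exists_mk_eq hgen _
  rw [mul_finsum_mem]
  refine (finsum_mem_congr rfl fun h hgood ↦ ?_).trans
    (finsum_mem_inter_support_eq' _ _ _ fun h hsupport ↦ ?_)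
  · have hsup : H ⊔ Subgroup.centralizer {h} = ⊤ := hgood.2
    obtain ⟨c, hc, hcx⟩ := (hsup_iff h).mp hsup
    have hcard := Subgroup.nat_card_conjugatesOf_mul_nat_card_centralizer_coset hc hsup
    rw [hcx] at hcard
    have hH : Nat.card H ≠ 0 := Nat.card_pos.ne'
    rw [one_div_mul_eq_div, div_eq_div_iff (by exact_mod_cast left_ne_zero_of_mul (hcard ▸ hH))
      (by exact_mod_cast hH), one_mul, mul_comm]
    exact_mod_cast hcard.symm
  · rw [Function.mem_support, mul_ne_zero_iff, Nat.cast_ne_zero, Nat.card_ne_zero] at hsupport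
    exact and_iff_left_of_imp fun _ ↦ (hsup_iff h).mpr (Set.nonempty_coe_sort.mp hsupport.2.1)

/-- The sum over elements `h ∈ H` with `H·C_G(h) = G` of `1/|h^G|` equals
`(1/|H|)` times the sum over `h ∈ H` of `|C_G(h) ∩ Hx|`, where `Hx` is any
generating coset of the cyclic quotient `G/H`. -/
theorem stmt1 {G : Type*} [Group G] [Finite G] (H : Subgroup G) [H.Normal]
    (hcyc : IsCyclic (G ⧸ H)) (x : G)
    (hgen : Subgroup.zpowers (QuotientGroup.mk x : G ⧸ H) = ⊤) :
    (∑ᶠ h ∈ {h : G | h ∈ H ∧ H ⊔ Subgroup.centralizer {h} = ⊤},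
        (1 : ℚ) / Nat.card (conjugatesOf h)) =
    (1 / Nat.card H) *
      ∑ᶠ h ∈ (H : Set G),
        (Nat.card {g : G | g ∈ Subgroup.centralizer {h} ∧
            (QuotientGroup.mk g : G ⧸ H) = QuotientGroup.mk x} : ℚ) :=
  stmt1_general H x hgen
end

section
/- If Hx and Hy are cosets of equal order in the cyclic quotient G/H, then there exists an integer a coprime to |G| such that the power map g ↦ g^a is a bijection of G mapping the coset Hx onto the coset Hy. -/
/-!
In the cyclic group `G/H`, elements of the same order generate the same subgroup, so
`Hy = (Hx)^m` with `m` prime to the order `n` of `Hx`. Since `n` divides `|G|`, the unit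
`m mod n` lifts to a unit `a mod |G|`. Then `g ↦ g^a` is a bijection of `G` and of `G/H`
(as `|G/H|` divides `|G|`), so it maps the fibre of `G → G/H` over `Hx` onto the fibre
over `(Hx)^a = Hy`.
-/

open Subgroup

theorem IsCyclic.mem_zpowers_of_pow_orderOf_eq_one {α : Type*} [Group α] [Finite α]
    [IsCyclic α] {a b : α} (hb : b ^ orderOf a = 1) : b ∈ zpowers a := by
  classical
  have : Fintype α := Fintype.ofFinite α
  have hsub : (zpowers a : Set α).toFinset ⊆ ({c | c ^ orderOf a = 1} : Finset α) := by
    intro c hc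
    obtain ⟨k, rfl⟩ := mem_zpowers_iff.mp (Set.mem_toFinset.mp hc)
    rw [Finset.mem_filter_univ, ← zpow_natCast, ← zpow_mul, mul_comm, zpow_mul, zpow_natCast,
      pow_orderOf_eq_one, one_zpow]
  have heq := Finset.eq_of_subset_of_card_le hsub <| by
    rw [Set.toFinset_card]
    exact (IsCyclic.card_pow_eq_one_le (orderOf_pos a)).trans_eq Fintype.card_zpowers.symm
  have hb' : b ∈ ({c | c ^ orderOf a = 1} : Finset α) := (Finset.mem_filter_univ b).mpr hb
  simpa [← heq] using hb'

theorem IsCyclic.exists_pow_eq_of_orderOf_eq {α : Type*} [Group α] [Finite α] [IsCyclic α]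
    {a b : α} (h : orderOf a = orderOf b) : ∃ m : ℕ, m.Coprime (orderOf a) ∧ a ^ m = b := by
  have hb : b ∈ zpowers a := mem_zpowers_of_pow_orderOf_eq_one (h ▸ pow_orderOf_eq_one b)
  obtain ⟨m, rfl⟩ := (isOfFinOrder_of_finite a).mem_powers_iff_mem_zpowers.mpr hb
  refine ⟨m, ?_, rfl⟩
  have hdiv : orderOf a / (orderOf a).gcd m = orderOf a := by
    rw [← orderOf_pow, ← h]
  rcases Nat.div_eq_self.mp hdiv with h0 | h1
  · exact absurd h0 (orderOf_pos a).ne'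
  · exact Nat.coprime_comm.mp h1

theorem Nat.exists_coprime_modEq_of_dvd {m n N : ℕ} [NeZero N] (hnN : n ∣ N)
    (hm : m.Coprime n) : ∃ a : ℕ, a.Coprime N ∧ a ≡ m [MOD n] := by
  obtain ⟨u, hu⟩ := ZMod.unitsMap_surjective hnN (ZMod.unitOfCoprime m hm)
  refine ⟨(u : ZMod N).val, ZMod.val_coe_unit_coprime u, ?_⟩
  rw [← ZMod.natCast_eq_natCast_iff, ← ZMod.coe_unitOfCoprime m hm, ← hu, ZMod.unitsMap_def]
  simp

theorem QuotientGroup.image_pow_setOf_mk_eq {G : Type*} [Group G] (H : Subgroup G) [H.Normal]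
    {n : ℕ} (hn : (Nat.card G).Coprime n) (q : G ⧸ H) :
    (fun g : G => g ^ n) '' {g | (g : G ⧸ H) = q} = {g : G | (g : G ⧸ H) = q ^ n} := by
  have hnQ : (Nat.card (G ⧸ H)).Coprime n := hn.coprime_dvd_left H.card_quotient_dvd_card
  ext h
  constructor
  · rintro ⟨g, rfl, rfl⟩
    exact QuotientGroup.mk_pow H g n
  · intro hh
    obtain ⟨g, rfl⟩ := hn.pow_left_bijective.2 h
    refine ⟨g, hnQ.pow_left_bijective.1 ?_, rfl⟩
    simpa using hh

/-- If `Hx` and `Hy` are cosets of equal order in the cyclic quotient `G/H`, then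
there is an integer `a` coprime to `|G|` such that `g ↦ g^a` is a bijection of `G`
mapping the coset `Hx` onto the coset `Hy`. -/
theorem stmt3 {G : Type*} [Group G] [Finite G] (H : Subgroup G) [H.Normal]
    (hcyc : IsCyclic (G ⧸ H)) (x y : G)
    (hord : orderOf (QuotientGroup.mk x : G ⧸ H) = orderOf (QuotientGroup.mk y : G ⧸ H)) :
    ∃ a : ℤ, IsCoprime a (Nat.card G : ℤ) ∧
      Function.Bijective (fun g : G => g ^ a) ∧
      (fun g : G => g ^ a) '' {g : G | (QuotientGroup.mk g : G ⧸ H) = QuotientGroup.mk x}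
        = {g : G | (QuotientGroup.mk g : G ⧸ H) = QuotientGroup.mk y} := by
  obtain ⟨m, hm, hxy⟩ := hcyc.exists_pow_eq_of_orderOf_eq hord
  have hdvd : orderOf (x : G ⧸ H) ∣ Nat.card G :=
    (_root_.orderOf_dvd_natCard _).trans H.card_quotient_dvd_card
  obtain ⟨a, haG, ham⟩ := Nat.exists_coprime_modEq_of_dvd hdvd hm
  have hxa : (x : G ⧸ H) ^ a = y := hxy ▸ pow_eq_pow_iff_modEq.mpr ham
  refine ⟨a, Nat.isCoprime_iff_coprime.mpr haG, ?_, ?_⟩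
  · simpa only [zpow_natCast] using haG.symm.pow_left_bijective
  · simpa only [zpow_natCast, hxa] using
      QuotientGroup.image_pow_setOf_mk_eq H haG.symm (x : G ⧸ H)
end

section
/- If Hx and Hy have equal order in G/H, then for every subgroup K with H ≤ K ≤ G, the number of G-conjugacy classes contained in Hx whose centralizing subgroup is K equals the number of G-conjugacy classes contained in Hy whose centralizing subgroup is K. -/
/-!
Since `G ⧸ H` is cyclic and `Hx`, `Hy` have the same order, `(Hx) ^ m = Hy` for some `m` coprime
to `|G|`. The power map `g ↦ g ^ m` is then a permutation of `G` commuting with conjugation; it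
carries the coset `Hx` onto `Hy` and preserves centralizers, since `g` is in turn a power of
`g ^ m`. Hence it induces a bijection between the two sets of conjugacy classes.
-/

open Subgroup

theorem IsCyclic.mem_zpowers_of_orderOf_dvd {α : Type*} [Group α] [Finite α] [IsCyclic α]
    {a b : α} (h : orderOf b ∣ orderOf a) : b ∈ zpowers a := by
  classical
  have := Fintype.ofFinite α
  by_contra hb
  have hsub : insert b (zpowers a : Set α).toFinset ⊆ ({g | g ^ orderOf a = 1} : Finset α) := by
    intro g hg
    simp only [Finset.mem_insert, Set.mem_toFinset, SetLike.mem_coe] at hg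
    simp only [Finset.mem_filter, Finset.mem_univ, true_and]
    rcases hg with rfl | ⟨k, rfl⟩
    · exact orderOf_dvd_iff_pow_eq_one.1 h
    · simp only [← zpow_natCast, ← zpow_mul, mul_comm _ (orderOf a : ℤ)]
      rw [zpow_mul, zpow_natCast, pow_orderOf_eq_one, one_zpow]
  have hcard := (Finset.card_le_card hsub).trans (IsCyclic.card_pow_eq_one_le (orderOf_pos a))
  rw [Finset.card_insert_of_notMem (by simpa using hb), Set.toFinset_card,
    ← Nat.card_eq_fintype_card, SetLike.coe_sort_coe, Nat.card_zpowers] at hcard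
  omega

theorem IsCyclic.exists_coprime_pow_eq_of_orderOf_eq {α : Type*} [Group α] [Finite α]
    [IsCyclic α] {a b : α} (h : orderOf a = orderOf b) {n : ℕ} [NeZero n]
    (hn : orderOf a ∣ n) : ∃ m : ℕ, m.Coprime n ∧ a ^ m = b := by
  obtain ⟨k, rfl⟩ : b ∈ Submonoid.powers a :=
    (isOfFinOrder_of_finite a).mem_powers_iff_mem_zpowers.2
      (IsCyclic.mem_zpowers_of_orderOf_dvd h.symm.dvd)
  have hk : (orderOf a).Coprime k := by
    rw [orderOf_pow, eq_comm, Nat.div_eq_self] at h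
    exact h.resolve_left (orderOf_pos a).ne'
  obtain ⟨u, hu⟩ := ZMod.unitsMap_surjective hn (ZMod.unitOfCoprime k hk.symm)
  refine ⟨(u : ZMod n).val, ZMod.val_coe_unit_coprime u, ?_⟩
  rw [pow_eq_pow_iff_modEq, ← ZMod.natCast_eq_natCast_iff, ZMod.natCast_val, ← ZMod.unitsMap_val hn,
    hu, ZMod.coe_unitOfCoprime]

theorem Subgroup.centralizer_singleton_pow_of_coprime {G : Type*} [Group G] {n : ℕ}
    (h : (Nat.card G).Coprime n) (g : G) : centralizer {g ^ n} = centralizer {g} := by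
  refine le_antisymm (fun c hc => ?_) (fun c hc => ?_)
  · rw [mem_centralizer_singleton_iff] at hc ⊢
    have := Commute.zpow_right hc ((Nat.card G).gcdB n)
    rwa [← powCoprime_apply h, ← powCoprime_symm_apply h, Equiv.symm_apply_apply] at this
  · rw [mem_centralizer_singleton_iff] at hc ⊢
    exact Commute.pow_right hc n

theorem isConj_pow_iff_of_coprime {G : Type*} [Group G] {n : ℕ} (h : (Nat.card G).Coprime n)
    {a b : G} : IsConj (a ^ n) (b ^ n) ↔ IsConj a b := by
  refine ⟨fun hab => ?_, IsConj.pow n⟩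
  obtain ⟨c, hc⟩ := isConj_iff.1 hab
  exact isConj_iff.2 ⟨c, (powCoprime h).injective (by simp only [powCoprime_apply, conj_pow, hc])⟩

noncomputable def ConjClasses.powCoprime {G : Type*} [Group G] {n : ℕ}
    (h : (Nat.card G).Coprime n) : ConjClasses G ≃ ConjClasses G :=
  Quotient.congr (_root_.powCoprime h) fun _ _ => (isConj_pow_iff_of_coprime h).symm

theorem ConjClasses.carrier_powCoprime {G : Type*} [Group G] {n : ℕ}
    (h : (Nat.card G).Coprime n) (C : ConjClasses G) :
    (ConjClasses.powCoprime h C).carrier = _root_.powCoprime h '' C.carrier := by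
  ext y
  rw [Equiv.image_eq_preimage_symm, Set.mem_preimage, carrier_eq_preimage_mk, carrier_eq_preimage_mk]
  simp only [Set.mem_preimage, Set.mem_singleton_iff, ← (ConjClasses.powCoprime h).symm_apply_eq]
  rfl

theorem ConjClasses.card_carrier_subset_eq_of_coprime {G : Type*} [Group G] {n : ℕ}
    (h : (Nat.card G).Coprime n) {S T : Set G} (hST : ∀ g, g ^ n ∈ T ↔ g ∈ S) :
    Nat.card {C : ConjClasses G // C.carrier ⊆ S} =
      Nat.card {C : ConjClasses G // C.carrier ⊆ T} := by
  refine Nat.card_congr <| (ConjClasses.powCoprime h).subtypeEquiv fun C => ?_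
  rw [carrier_powCoprime, Set.image_subset_iff, show _root_.powCoprime h ⁻¹' T = S from Set.ext hST]

theorem stmt5_general {G : Type*} [Group G] [Finite G] (H : Subgroup G) [H.Normal]
    (hcyc : IsCyclic (G ⧸ H)) (x y : G)
    (hord : orderOf (QuotientGroup.mk x : G ⧸ H) = orderOf (QuotientGroup.mk y : G ⧸ H))
    (K : Subgroup G) :
    Nat.card {C : ConjClasses G //
        C.carrier ⊆ {g : G | (QuotientGroup.mk g : G ⧸ H) = QuotientGroup.mk x} ∧
        ∀ g ∈ C.carrier, H ⊔ Subgroup.centralizer {g} = K} =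
    Nat.card {C : ConjClasses G //
        C.carrier ⊆ {g : G | (QuotientGroup.mk g : G ⧸ H) = QuotientGroup.mk y} ∧
        ∀ g ∈ C.carrier, H ⊔ Subgroup.centralizer {g} = K} := by
  obtain ⟨m, hm, hxy⟩ := IsCyclic.exists_coprime_pow_eq_of_orderOf_eq hord
    (n := Nat.card G) ((_root_.orderOf_dvd_natCard _).trans H.card_quotient_dvd_card)
  have hmG : (Nat.card G).Coprime m := hm.symm
  have hmQ : (Nat.card (G ⧸ H)).Coprime m := hmG.coprime_dvd_left H.card_quotient_dvd_card
  have hcount := ConjClasses.card_carrier_subset_eq_of_coprime hmG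
    (S := {g : G | (g : G ⧸ H) = x} ∩ {g | H ⊔ centralizer {g} = K})
    (T := {g : G | (g : G ⧸ H) = y} ∩ {g | H ⊔ centralizer {g} = K}) fun g => by
      simp only [Set.mem_inter_iff, Set.mem_ofPred_eq, QuotientGroup.mk_pow, ← hxy,
        centralizer_singleton_pow_of_coprime hmG]
      rw [← powCoprime_apply hmQ, ← powCoprime_apply hmQ, (powCoprime hmQ).injective.eq_iff]
  simp only [Set.subset_inter_iff] at hcount
  exact hcount

/-- If `Hx` and `Hy` have equal order in the cyclic quotient `G/H`, then for every
subgroup `K` with `H ≤ K ≤ G`, the number of `G`-conjugacy classes contained in `Hx`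
whose centralizing subgroup `H·C_G(g)` is `K` equals the corresponding number for `Hy`. -/
theorem stmt5 {G : Type*} [Group G] [Finite G] (H : Subgroup G) [H.Normal]
    (hcyc : IsCyclic (G ⧸ H)) (x y : G)
    (hord : orderOf (QuotientGroup.mk x : G ⧸ H) = orderOf (QuotientGroup.mk y : G ⧸ H))
    (K : Subgroup G) (hHK : H ≤ K) :
    Nat.card {C : ConjClasses G //
        C.carrier ⊆ {g : G | (QuotientGroup.mk g : G ⧸ H) = QuotientGroup.mk x} ∧
        ∀ g ∈ C.carrier, H ⊔ Subgroup.centralizer {g} = K} =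
    Nat.card {C : ConjClasses G //
        C.carrier ⊆ {g : G | (QuotientGroup.mk g : G ⧸ H) = QuotientGroup.mk y} ∧
        ∀ g ∈ C.carrier, H ⊔ Subgroup.centralizer {g} = K} :=
  stmt5_general H hcyc x y hord K
end

section
/- Let H ≤ K ≤ G. Then the G-conjugacy classes contained in K whose centralizing subgroup H·C_G(g) equals K are equally distributed among the cosets of H in K; that is, each coset of H contained in K contains the same number of such classes. -/
/-!
Weight each `g ∈ G` by `|H ∩ C_G(g)|`. By orbit–stabilizer and the product formula
`|H C_G(g)| · |H ∩ C_G(g)| = |H| · |C_G(g)|`, the number of classes in the coset `xH` with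
centralizing subgroup `K` is `|K| / (|G| |H|)` times the total weight `M(K, x)` of the elements
of `xH` whose centralizing subgroup is `K`. Since `G/H` is cyclic, `K = H⟨z⟩` for some `z`, and
`K ≤ H C_G(g)` iff `z ∈ H C_G(g)`. Double counting the commuting pairs in `xH × zH` then shows
that `∑_{L ≥ K} M(L, x)` does not depend on `x ∈ K`, and downward induction on `K` gives the
same for `M(K, x)`.
-/

open Finset Subgroup

theorem eqOn_of_sum_filter_le_eq {α M : Type*} [PartialOrder α] [Fintype α] [DecidableLE α]
    [AddCancelCommMonoid M] {s : Set α} (hs : IsUpperSet s) {f g : α → M}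
    (h : ∀ a ∈ s, ∑ b with a ≤ b, f b = ∑ b with a ≤ b, g b) : Set.EqOn f g s := by
  intro a ha
  induction a using WellFoundedGT.induction with
  | _ a ih =>
    classical
    have hsplit (φ : α → M) : ∑ b with a ≤ b, φ b = φ a + ∑ b with a < b, φ b := by
      rw [← add_sum_erase _ _ (mem_filter.mpr ⟨Finset.mem_univ a, le_refl a⟩)]
      congr 2
      ext b
      simp [lt_iff_le_and_ne, and_comm, eq_comm]
    have hsum := h a ha
    rw [hsplit f, hsplit g, sum_congr rfl fun b hb =>
      ih b (mem_filter.mp hb).2 (hs (mem_filter.mp hb).2.le ha)] at hsum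
    exact add_right_cancel hsum

namespace ConjClassDistribution

variable {G : Type*} [Group G]

lemma card_sup_mul_card_inf (H C : Subgroup G) [H.Normal] :
    Nat.card (H ⊔ C : Subgroup G) * Nat.card (H ⊓ C : Subgroup G) = Nat.card H * Nat.card C := by
  have hC := relIndex_inf_mul_relIndex ⊥ H C
  have hS := relIndex_inf_mul_relIndex ⊥ H (H ⊔ C)
  simp only [relIndex_bot_left, bot_inf_eq] at hC hS
  rw [inf_sup_self, relIndex_sup_left] at hS
  rw [← hS, ← hC]
  ring

lemma mem_sup_iff_exists_mk_eq {H : Subgroup G} [H.Normal] {C : Subgroup G} {z : G} :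
    z ∈ H ⊔ C ↔ ∃ c ∈ C, (c : G ⧸ H) = z := by
  have hcomap := comap_map_eq (QuotientGroup.mk' H) C
  rw [QuotientGroup.ker_mk', sup_comm] at hcomap
  rw [← hcomap, mem_comap, Subgroup.mem_map]
  simp only [QuotientGroup.mk'_apply]

lemma card_centralizer_mul_ncard_carrier (g : G) :
    Nat.card (centralizer {g}) * (ConjClasses.mk g).carrier.ncard = Nat.card G := by
  rw [nat_card_centralizer_nat_card_stabilizer, ← ConjAct.orbit_eq_carrier_conjClasses,
    ← MulAction.index_stabilizer, card_mul_index]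
  exact Nat.card_congr ConjAct.ofConjAct.toEquiv

lemma exists_sup_zpowers_eq {H : Subgroup G} [H.Normal] [IsCyclic (G ⧸ H)] {K : Subgroup G}
    (hHK : H ≤ K) : ∃ z, H ⊔ zpowers z = K := by
  obtain ⟨ζ, hζ⟩ :=
    (K.map (QuotientGroup.mk' H)).isCyclic_iff_exists_zpowers_eq_top.mp inferInstance
  obtain ⟨z, rfl⟩ := QuotientGroup.mk_surjective ζ
  refine ⟨z, ?_⟩
  have hcomap := congrArg (comap (QuotientGroup.mk' H)) hζ
  rw [← QuotientGroup.mk'_apply, ← MonoidHom.map_zpowers, comap_map_eq, comap_map_eq,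
    QuotientGroup.ker_mk', sup_eq_left.mpr hHK, sup_comm] at hcomap
  exact hcomap

section Commutative

variable {H : Subgroup G} [H.Normal] [IsMulCommutative (G ⧸ H)]

lemma mk_conj (t g : G) : ((t * g * t⁻¹ : G) : G ⧸ H) = g := by
  rw [QuotientGroup.mk_mul, QuotientGroup.mk_mul, QuotientGroup.mk_inv, mul_comm' (t : G ⧸ H),
    mul_inv_cancel_right]

lemma centralizer_le_sup_centralizer_conj (t g : G) :
    centralizer {g} ≤ H ⊔ centralizer {t * g * t⁻¹} := by
  intro c hc
  have hconj : t * c * t⁻¹ ∈ centralizer {t * g * t⁻¹} :=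
    mem_centralizer_singleton_iff.mpr (Commute.conj (mem_centralizer_singleton_iff.mp hc) t)
  have hH : c * (t * c * t⁻¹)⁻¹ ∈ H := by
    rw [← QuotientGroup.eq_one_iff, QuotientGroup.mk_mul, QuotientGroup.mk_inv, mk_conj,
      mul_inv_cancel]
  simpa [mul_assoc] using mul_mem (mem_sup_left hH) (mem_sup_right hconj)

lemma sup_centralizer_conj (t g : G) :
    H ⊔ centralizer {t * g * t⁻¹} = H ⊔ centralizer {g} := by
  refine le_antisymm (sup_le le_sup_left ?_) (sup_le le_sup_left ?_)
  · simpa [mul_assoc] using centralizer_le_sup_centralizer_conj (H := H) t⁻¹ (t * g * t⁻¹)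
  · exact centralizer_le_sup_centralizer_conj t g

end Commutative

section Finite

open scoped Classical

variable [Fintype G]

lemma sum_card_centralizer_mk_eq_card (C : ConjClasses G) :
    ∑ g with ConjClasses.mk g = C, Nat.card (centralizer {g}) = Nat.card G := by
  obtain ⟨g₀, rfl⟩ := ConjClasses.mk_surjective C
  have hcarrier :
      ((univ.filter fun g => ConjClasses.mk g = ConjClasses.mk g₀ : Finset G) : Set G)
        = (ConjClasses.mk g₀).carrier := by
    ext g
    simp [ConjClasses.mem_carrier_iff_mk_eq]
  have hpos : 0 < (ConjClasses.mk g₀).carrier.ncard :=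
    (Set.ncard_pos (Set.toFinite _)).mpr ⟨g₀, ConjClasses.mem_carrier_mk⟩
  have hconst : ∀ g ∈ (univ.filter fun g => ConjClasses.mk g = ConjClasses.mk g₀),
      Nat.card (centralizer {g}) = Nat.card (centralizer {g₀}) := by
    intro g hg
    have hg' := card_centralizer_mul_ncard_carrier g
    rw [(mem_filter.mp hg).2, ← card_centralizer_mul_ncard_carrier g₀] at hg'
    exact Nat.eq_of_mul_eq_mul_right hpos hg'
  rw [sum_congr rfl hconst, sum_const, smul_eq_mul, ← Set.ncard_coe_finset, hcarrier, mul_comm,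
    card_centralizer_mul_ncard_carrier]

theorem card_mul_card_eq_sum_card_centralizer (q : ConjClasses G → Prop) [DecidablePred q] :
    Nat.card {C // q C} * Nat.card G
      = ∑ g with q (ConjClasses.mk g), Nat.card (centralizer {g}) := by
  rw [← sum_fiberwise_of_maps_to (t := univ.filter q) (g := ConjClasses.mk) (by simp)]
  have hfiber : ∀ C ∈ univ.filter q,
      ∑ g ∈ univ.filter (fun g => q (ConjClasses.mk g)) with ConjClasses.mk g = C,
        Nat.card (centralizer {g}) = Nat.card G := by
    intro C hC
    rw [filter_filter, ← sum_card_centralizer_mk_eq_card C]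
    refine sum_congr (filter_congr fun g _ => ?_) fun _ _ => rfl
    exact and_iff_right_of_imp fun hg => hg ▸ (mem_filter.mp hC).2
  rw [sum_congr rfl hfiber, sum_const, smul_eq_mul, Nat.card_eq_fintype_card, Fintype.card_subtype]

lemma card_filter_mk_eq_and_mem (H C : Subgroup G) [H.Normal] (z : G) :
    #{c : G | (c : G ⧸ H) = z ∧ c ∈ C}
      = if z ∈ H ⊔ C then Nat.card (H ⊓ C : Subgroup G) else 0 := by
  split_ifs with hz
  · obtain ⟨c₀, hc₀, hc₀z⟩ := mem_sup_iff_exists_mk_eq.mp hz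
    rw [← hc₀z, ← Fintype.card_subtype, ← Nat.card_eq_fintype_card]
    refine Nat.card_congr (Equiv.subtypeEquiv (Equiv.mulLeft c₀⁻¹) fun c => ?_)
    rw [Equiv.coe_mulLeft, Subgroup.mem_inf, mul_mem_cancel_left (inv_mem hc₀), eq_comm,
      QuotientGroup.eq]
  · rw [card_eq_zero, filter_eq_empty_iff]
    rintro c - ⟨hcz, hc⟩
    exact hz (mem_sup_iff_exists_mk_eq.mpr ⟨c, hc, hcz⟩)

variable (H : Subgroup G)

noncomputable def weight (g : G) : ℕ := Nat.card (H ⊓ centralizer {g} : Subgroup G)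

noncomputable def weightOn (K : Subgroup G) (x : G) : ℕ :=
  ∑ g ∈ {g : G | (g : G ⧸ H) = x ∧ H ⊔ centralizer {g} = K}, weight H g

noncomputable def weightAbove (K : Subgroup G) (x : G) : ℕ :=
  ∑ g ∈ {g : G | (g : G ⧸ H) = x ∧ K ≤ H ⊔ centralizer {g}}, weight H g

lemma weightAbove_eq_sum_weightOn (K : Subgroup G) (x : G) :
    weightAbove H K x = ∑ L with K ≤ L, weightOn H L x := by
  rw [weightAbove, ← sum_fiberwise_of_maps_to (t := univ.filter (K ≤ ·))
    (g := fun g => H ⊔ centralizer {g}) (fun g hg => by simpa using (mem_filter.mp hg).2.2)]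
  refine sum_congr rfl fun L hL => ?_
  rw [weightOn, filter_filter]
  refine sum_congr (filter_congr fun g _ => ?_) fun _ _ => rfl
  constructor
  · rintro ⟨⟨hgx, -⟩, hgL⟩
    exact ⟨hgx, hgL⟩
  · rintro ⟨hgx, rfl⟩
    exact ⟨⟨hgx, (mem_filter.mp hL).2⟩, rfl⟩

lemma weightAbove_sup_zpowers [H.Normal] {z x : G} (hx : x ∈ H ⊔ zpowers z) :
    weightAbove H (H ⊔ zpowers z) x = ∑ c ∈ {c : G | (c : G ⧸ H) = z}, weight H c := by
  have hcount (g : G) : #{c : G | (c : G ⧸ H) = z ∧ c ∈ centralizer {g}}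
      = if H ⊔ zpowers z ≤ H ⊔ centralizer {g} then weight H g else 0 := by
    rw [card_filter_mk_eq_and_mem, sup_le_iff, zpowers_le, weight]
    simp only [le_sup_left, true_and]
  have hcount' (c : G) (hc : (c : G ⧸ H) = z) :
      #{g : G | (g : G ⧸ H) = x ∧ g ∈ centralizer {c}} = weight H c := by
    have hz : z ∈ H ⊔ centralizer {c} :=
      mem_sup_iff_exists_mk_eq.mpr ⟨c, mem_centralizer_singleton_iff.mpr rfl, hc⟩
    rw [card_filter_mk_eq_and_mem, if_pos (sup_le le_sup_left (zpowers_le.mpr hz) hx), weight]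
  -- double count the commuting pairs `(g, c)` with `g ∈ xH`, `c ∈ zH`
  calc weightAbove H (H ⊔ zpowers z) x
      = ∑ g ∈ {g : G | (g : G ⧸ H) = x},
          #{c : G | (c : G ⧸ H) = z ∧ c ∈ centralizer {g}} := by
        rw [weightAbove, ← filter_filter, sum_filter]
        exact sum_congr rfl fun g _ => (hcount g).symm
    _ = ∑ g ∈ {g : G | (g : G ⧸ H) = x},
          ∑ c ∈ {c : G | (c : G ⧸ H) = z ∧ c ∈ centralizer {g}}, 1 := by
        simp only [card_eq_sum_ones]
    _ = ∑ c ∈ {c : G | (c : G ⧸ H) = z},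
          ∑ g ∈ {g : G | (g : G ⧸ H) = x ∧ g ∈ centralizer {c}}, 1 := by
        refine sum_comm' fun g c => ?_
        simp only [mem_filter, mem_univ, true_and, mem_centralizer_singleton_iff]
        exact ⟨fun ⟨h₁, h₂, h₃⟩ => ⟨⟨h₁, h₃.symm⟩, h₂⟩, fun ⟨⟨h₁, h₃⟩, h₂⟩ => ⟨h₁, h₂, h₃.symm⟩⟩
    _ = ∑ c ∈ {c : G | (c : G ⧸ H) = z}, weight H c := by
        refine sum_congr rfl fun c hc => ?_
        rw [← card_eq_sum_ones, hcount' c (mem_filter.mp hc).2]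

lemma weightAbove_eq_of_mem [H.Normal] [IsCyclic (G ⧸ H)] {K : Subgroup G} (hHK : H ≤ K)
    {x y : G} (hx : x ∈ K) (hy : y ∈ K) : weightAbove H K x = weightAbove H K y := by
  obtain ⟨z, rfl⟩ := exists_sup_zpowers_eq hHK
  rw [weightAbove_sup_zpowers H hx, weightAbove_sup_zpowers H hy]

theorem weightOn_eq_of_mem [H.Normal] [IsCyclic (G ⧸ H)] {K : Subgroup G} (hHK : H ≤ K)
    {x y : G} (hx : x ∈ K) (hy : y ∈ K) : weightOn H K x = weightOn H K y := by
  refine eqOn_of_sum_filter_le_eq (s := {L | H ≤ L ∧ x ∈ L ∧ y ∈ L})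
    (f := (weightOn H · x)) (g := (weightOn H · y)) ?_
    (fun L ⟨hHL, hxL, hyL⟩ => ?_) ⟨hHK, hx, hy⟩
  · rintro L L' hLL' ⟨hHL, hxL, hyL⟩
    exact ⟨hHL.trans hLL', hLL' hxL, hLL' hyL⟩
  · rw [← weightAbove_eq_sum_weightOn, ← weightAbove_eq_sum_weightOn]
    exact weightAbove_eq_of_mem H hHL hxL hyL

theorem card_conjClasses_mul_eq [H.Normal] [IsMulCommutative (G ⧸ H)] (K : Subgroup G) (x : G) :
    Nat.card {C : ConjClasses G //
        C.carrier ⊆ {g : G | (QuotientGroup.mk g : G ⧸ H) = QuotientGroup.mk x} ∧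
        ∀ g ∈ C.carrier, H ⊔ Subgroup.centralizer {g} = K} * (Nat.card G * Nat.card H)
      = Nat.card K * weightOn H K x := by
  set P : G → Prop := fun g => (g : G ⧸ H) = x ∧ H ⊔ centralizer {g} = K
  have hP_conj (t g : G) : P (t * g * t⁻¹) ↔ P g := by
    simp only [P, mk_conj, sup_centralizer_conj]
  have hclass (g : G) : (∀ g' ∈ (ConjClasses.mk g).carrier, P g') ↔ P g := by
    refine ⟨fun h => h g ConjClasses.mem_carrier_mk, fun hg g' hg' => ?_⟩
    obtain ⟨t, rfl⟩ := isConj_iff.mp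
      (ConjClasses.mk_eq_mk_iff_isConj.mp (ConjClasses.mem_carrier_iff_mk_eq.mp hg').symm)
    exact (hP_conj t g).mpr hg
  have hsubtype (C : ConjClasses G) :
      (C.carrier ⊆ {g : G | (g : G ⧸ H) = x} ∧ ∀ g ∈ C.carrier, H ⊔ centralizer {g} = K)
        ↔ ∀ g ∈ C.carrier, P g := by
    simp only [P, Set.subset_def, Set.mem_ofPred_eq, forall_and]
  rw [Nat.card_congr (Equiv.subtypeEquivRight hsubtype), ← mul_assoc,
    card_mul_card_eq_sum_card_centralizer, sum_mul, weightOn, mul_sum]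
  refine sum_congr (filter_congr fun g _ => hclass g) fun g hg => ?_
  rw [← (mem_filter.mp hg).2.2, weight, card_sup_mul_card_inf, mul_comm]

end Finite

end ConjClassDistribution

open ConjClassDistribution

/-- Main theorem: let `H ⊴ G` with `G/H` cyclic, and `H ≤ K ≤ G`. Then the
`G`-conjugacy classes contained in `K` whose centralizing subgroup `H·C_G(g)`
equals `K` are equally distributed among the cosets of `H` in `K`: any two cosets
of `H` contained in `K` contain the same number of such classes. -/
theorem stmt6 {G : Type*} [Group G] [Finite G] (H : Subgroup G) [H.Normal]
    (hcyc : IsCyclic (G ⧸ H)) (K : Subgroup G) (hHK : H ≤ K) :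
    ∀ x ∈ K, ∀ y ∈ K,
      Nat.card {C : ConjClasses G //
          C.carrier ⊆ {g : G | (QuotientGroup.mk g : G ⧸ H) = QuotientGroup.mk x} ∧
          ∀ g ∈ C.carrier, H ⊔ Subgroup.centralizer {g} = K} =
      Nat.card {C : ConjClasses G //
          C.carrier ⊆ {g : G | (QuotientGroup.mk g : G ⧸ H) = QuotientGroup.mk y} ∧
          ∀ g ∈ C.carrier, H ⊔ Subgroup.centralizer {g} = K} := by
  intro x hx y hy
  cases nonempty_fintype G
  have hpos : 0 < Nat.card G * Nat.card H := Nat.mul_pos Nat.card_pos Nat.card_pos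
  refine Nat.eq_of_mul_eq_mul_right hpos ?_
  rw [card_conjClasses_mul_eq, card_conjClasses_mul_eq, weightOn_eq_of_mem H hHK hx hy]
end

section
/- Let C_i ≤ C_j be cyclic groups of orders i and j with i dividing j, and write i = uv where v is the largest divisor of i coprime to j/i. Then every element of any generating coset of C_j/C_i has order divisible by j/v. -/
/-!
Let `g` generate `C_j` and let `h` map to a generator of `C_j / C_i`. Then `g = h ^ k * c` with
`c ∈ C_i`, so `j = orderOf g` divides `lcm (orderOf h) i`. Comparing `p`-adic valuations:
a prime `p ∣ j / i` has `v_p(j) > v_p(i)`, so `v_p(j) ≤ v_p(orderOf h)`, while `v_p(v) = 0`;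
a prime `p ∤ j / i` has `v_p(j) = v_p(i) = v_p(v)` by maximality of `v`, so it does not
divide `j / v` at all.
-/

theorem orderOf_dvd_lcm_of_zpowers_mk_eq_top {G : Type*} [CommGroup G] {H : Subgroup G} {h : G}
    (htop : Subgroup.zpowers (QuotientGroup.mk h : G ⧸ H) = ⊤) (g : G) :
    orderOf g ∣ Nat.lcm (orderOf h) (Nat.card H) := by
  obtain ⟨k, hk⟩ : (g : G ⧸ H) ∈ Subgroup.zpowers (h : G ⧸ H) := htop ▸ Subgroup.mem_top _
  have hc : (h ^ k)⁻¹ * g ∈ H := QuotientGroup.eq.mp hk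
  have hhk : orderOf (h ^ k) ∣ orderOf h := by
    simpa using (Subgroup.zpowers h).orderOf_dvd_natCard (Subgroup.zpow_mem_zpowers h k)
  calc orderOf g = orderOf (h ^ k * ((h ^ k)⁻¹ * g)) := by rw [mul_inv_cancel_left]
    _ ∣ Nat.lcm (orderOf (h ^ k)) (orderOf ((h ^ k)⁻¹ * g)) := (Commute.all _ _).orderOf_mul_dvd_lcm
    _ ∣ Nat.lcm (orderOf h) (Nat.card H) :=
      Nat.lcm_dvd (hhk.trans (Nat.dvd_lcm_left _ _))
        ((H.orderOf_dvd_natCard hc).trans (Nat.dvd_lcm_right _ _))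

namespace Nat

theorem factorization_le_max_of_dvd_lcm {j n i : ℕ} (hn : n ≠ 0) (hi : i ≠ 0)
    (hj : j ∣ Nat.lcm n i) (p : ℕ) :
    j.factorization p ≤ max (n.factorization p) (i.factorization p) := by
  have := (Nat.factorization_le_iff_dvd (ne_zero_of_dvd_ne_zero (Nat.lcm_ne_zero hn hi) hj)
    (Nat.lcm_ne_zero hn hi)).mpr hj p
  rwa [Nat.factorization_lcm hn hi, Finsupp.sup_apply] at this

theorem factorization_le_of_forall_coprime_dvd {i v d p : ℕ} (hp : p.Prime) (hv : v ≠ 0)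
    (hpd : ¬p ∣ d) (hvmax : ∀ w : ℕ, w ∣ i → Nat.Coprime w d → w ∣ v) :
    i.factorization p ≤ v.factorization p :=
  (hp.pow_dvd_iff_le_factorization hv).mp <|
    hvmax _ (Nat.ordProj_dvd i p) ((hp.coprime_iff_not_dvd.mpr hpd).pow_left _)

theorem div_dvd_of_dvd_lcm_of_forall_coprime_dvd {j i n v : ℕ} (hj : j ≠ 0)
    (hij : i ∣ j) (hl : j ∣ Nat.lcm n i) (hv : v ∣ i)
    (hvcop : Nat.Coprime v (j / i)) (hvmax : ∀ w : ℕ, w ∣ i → Nat.Coprime w (j / i) → w ∣ v) :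
    j / v ∣ n := by
  rcases eq_or_ne n 0 with rfl | hn
  · exact dvd_zero _
  have hi : i ≠ 0 := ne_zero_of_dvd_ne_zero hj hij
  have hv0 : v ≠ 0 := ne_zero_of_dvd_ne_zero hi hv
  have hvj : v ∣ j := hv.trans hij
  rw [← Nat.factorization_prime_le_iff_dvd (Nat.div_ne_zero_iff_of_dvd hvj |>.mpr ⟨hj, hv0⟩) hn]
  intro p hp
  have hji := Nat.factorization_div hij
  have hij_le := (Nat.factorization_le_iff_dvd hi hj).mpr hij p
  rw [Nat.factorization_div hvj, Finsupp.tsub_apply]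
  by_cases hpd : p ∣ j / i
  · have hvp : v.factorization p = 0 := Nat.factorization_eq_zero_of_not_dvd fun hpv =>
      hp.one_lt.ne' (Nat.eq_one_of_dvd_coprimes hvcop hpv hpd)
    have hpos : 0 < (j / i).factorization p :=
      hp.factorization_pos_of_dvd (Nat.div_ne_zero_iff_of_dvd hij |>.mpr ⟨hj, hi⟩) hpd
    rw [hji, Finsupp.tsub_apply] at hpos
    have := factorization_le_max_of_dvd_lcm hn hi hl p
    omega
  · have hpi := factorization_le_of_forall_coprime_dvd hp hv0 hpd hvmax
    have hzero : (j / i).factorization p = 0 := Nat.factorization_eq_zero_of_not_dvd hpd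
    rw [hji, Finsupp.tsub_apply] at hzero
    omega

end Nat

theorem stmt7_general {Cj : Type*} [CommGroup Cj] [Finite Cj] [IsCyclic Cj]
    (j i v : ℕ) (hj : Nat.card Cj = j) (Ci : Subgroup Cj) (hi : Nat.card Ci = i)
    (hij : i ∣ j) (hv : v ∣ i) (hvcop : Nat.Coprime v (j / i))
    (hvmax : ∀ w : ℕ, w ∣ i → Nat.Coprime w (j / i) → w ∣ v) :
    ∀ h : Cj, Subgroup.zpowers (QuotientGroup.mk h : Cj ⧸ Ci) = ⊤ →
      (j / v) ∣ orderOf h := by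
  intro h htop
  obtain ⟨g, hg⟩ := IsCyclic.exists_ofOrder_eq_natCard (α := Cj)
  have hl : j ∣ Nat.lcm (orderOf h) i := by
    simpa only [hg, hj, hi] using orderOf_dvd_lcm_of_zpowers_mk_eq_top htop g
  exact Nat.div_dvd_of_dvd_lcm_of_forall_coprime_dvd (hj ▸ Nat.card_pos.ne') hij hl hv hvcop hvmax

/-- Let `Ci ≤ Cj` be cyclic of orders `i ∣ j`, and write `i = u*v` where `v` is the
largest divisor of `i` coprime to `j/i`. Then every element of any generating coset
of `Cj/Ci` has order divisible by `j/v`. -/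
theorem stmt7 {Cj : Type*} [CommGroup Cj] [Finite Cj] [IsCyclic Cj]
    (j i u v : ℕ) (hj : Nat.card Cj = j) (Ci : Subgroup Cj) (hi : Nat.card Ci = i)
    (hij : i ∣ j) (huv : i = u * v) (hv : v ∣ i) (hvcop : Nat.Coprime v (j / i))
    (hvmax : ∀ w : ℕ, w ∣ i → Nat.Coprime w (j / i) → w ∣ v) :
    ∀ h : Cj, Subgroup.zpowers (QuotientGroup.mk h : Cj ⧸ Ci) = ⊤ →
      (j / v) ∣ orderOf h :=
  stmt7_general j i v hj Ci hi hij hv hvcop hvmax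
end

section
/- Let C_i ≤ C_j be cyclic groups of orders i and j with i | j, and write i = uv where v is the largest divisor of i coprime to j/i. Then for each divisor d of v, the number of elements of order (j/v)·d in any fixed generating coset of C_j/C_i is u·φ(d), where φ is Euler's totient function. -/
/-!
Put `W = j / v`. If `h` lies in the generating coset `x Cᵢ`, then `⟨h⟩ Cᵢ = Cⱼ`, so
`lcm (ord h) i = j`; hence `j / ord h` is a divisor of `i` coprime to `j / i`, so it divides `v`
and `W ∣ ord h`. As `v` is invertible modulo `j / i`, the coset contains some `y ^ v`, which is
killed by `W`; translating by it, the elements of the coset killed by `W * e` correspond to the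
elements of `Cᵢ` killed by `W * e`, and there are `gcd i (W * e) = u * e` of those. Sorting them by
their order `W * e'` with `e' ∣ e` gives `∑ e' ∣ e, #{order W * e'} = u * e = ∑ e' ∣ e, u * φ e'`
for every `e ∣ v`, which determines `#{order W * d} = u * φ d` by induction over divisors.
-/

open Finset Subgroup

theorem eq_of_forall_sum_divisors_eq {f g : ℕ → ℕ} {v : ℕ} (hv : v ≠ 0)
    (h : ∀ d, d ∣ v → ∑ e ∈ d.divisors, f e = ∑ e ∈ d.divisors, g e) {d : ℕ} (hd : d ∣ v) :
    f d = g d := by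
  induction d using Nat.strong_induction_on with
  | _ d ih =>
    have hsum := h d hd
    rw [← Nat.cons_self_properDivisors (ne_zero_of_dvd_ne_zero hv hd), sum_cons, sum_cons,
      sum_congr rfl fun e he => ih e (Nat.mem_properDivisors.mp he).2
        ((Nat.mem_properDivisors.mp he).1.trans hd)] at hsum
    exact Nat.add_right_cancel hsum

theorem div_dvd_of_lcm_eq {o i j v : ℕ} (ho : 0 < o) (hi : 0 < i) (hlcm : Nat.lcm o i = j)
    (hv : v ∣ i) (hvmax : ∀ w, w ∣ i → w.Coprime (j / i) → w ∣ v) : j / v ∣ o := by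
  have hg : 0 < Nat.gcd o i := Nat.gcd_pos_of_pos_left i ho
  have hjo : j / o = i / Nat.gcd o i := by
    rw [← hlcm, Nat.lcm, Nat.mul_div_assoc o (Nat.gcd_dvd_right o i),
      Nat.mul_div_cancel_left _ ho]
  have hji : j / i = o / Nat.gcd o i := by
    rw [← hlcm, Nat.lcm, Nat.mul_comm, Nat.mul_div_assoc i (Nat.gcd_dvd_left o i),
      Nat.mul_div_cancel_left _ hi]
  have hjov : j / o ∣ v := hvmax _ (hjo ▸ Nat.div_dvd_of_dvd (Nat.gcd_dvd_right o i))
    (hjo ▸ hji ▸ (Nat.coprime_div_gcd_div_gcd hg).symm)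
  calc j / v ∣ j / (j / o) := Nat.div_dvd_div_left (hv.trans (hlcm ▸ Nat.dvd_lcm_right o i)) hjov
    _ = o := Nat.div_div_self (hlcm ▸ Nat.dvd_lcm_left o i) (hlcm ▸ Nat.lcm_ne_zero ho.ne' hi.ne')

theorem gcd_mul_mul_eq_of_coprime {i u v J e : ℕ} (huv : i = u * v) (hvJ : v.Coprime J)
    (he : e ∣ v) : i.gcd (J * u * e) = u * e := by
  rw [huv, mul_comm J, mul_assoc, Nat.gcd_mul_left,
    Nat.Coprime.gcd_mul_left_cancel_right e hvJ.symm, Nat.gcd_eq_right he]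

theorem card_pow_eq_one_eq_sum_divisors {G : Type*} [Group G] [Finite G] (P : G → Prop)
    {w d : ℕ} (hd : d ≠ 0) (hP : ∀ h, P h → w ∣ orderOf h) :
    Nat.card {h // P h ∧ h ^ (w * d) = 1} =
      ∑ e ∈ d.divisors, Nat.card {h // P h ∧ orderOf h = w * e} := by
  classical
  have := Fintype.ofFinite G
  simp only [Nat.card_eq_fintype_card, Fintype.card_subtype]
  have hw : ∀ h, P h → w ≠ 0 := fun h hPh hw =>
    (orderOf_pos h).ne' (Nat.eq_zero_of_zero_dvd (hw ▸ hP h hPh))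
  rw [card_eq_sum_card_fiberwise (f := fun h => orderOf h / w) (t := d.divisors)]
  · refine sum_congr rfl fun e he => congrArg card (ext fun h => ?_)
    simp only [mem_filter, mem_univ, true_and]
    constructor
    · rintro ⟨⟨hPh, -⟩, rfl⟩
      exact ⟨hPh, (Nat.mul_div_cancel' (hP h hPh)).symm⟩
    · rintro ⟨hPh, hwe⟩
      refine ⟨⟨hPh, orderOf_dvd_iff_pow_eq_one.mp ?_⟩, ?_⟩
      · exact hwe ▸ mul_dvd_mul_left w (Nat.dvd_of_mem_divisors he)
      · rw [hwe, Nat.mul_div_cancel_left _ (Nat.pos_of_ne_zero (hw h hPh))]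
  · intro h hh
    obtain ⟨hPh, hpow⟩ := (mem_filter.mp hh).2
    obtain ⟨k, hk⟩ := hP h hPh
    have hkd : w * k ∣ w * d := hk ▸ orderOf_dvd_of_pow_eq_one hpow
    change orderOf h / w ∈ d.divisors
    rw [hk, Nat.mul_div_cancel_left _ (Nat.pos_of_ne_zero (hw h hPh)), Nat.mem_divisors]
    exact ⟨Nat.dvd_of_mul_dvd_mul_left (Nat.pos_of_ne_zero (hw h hPh)) hkd, hd⟩

theorem IsCyclic.card_pow_eq_one {G : Type*} [CommGroup G] [IsCyclic G] [Finite G] (n : ℕ) :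
    Nat.card {g : G // g ^ n = 1} = (Nat.card G).gcd n :=
  IsCyclic.card_powMonoidHom_ker G n

section Coset

variable {G : Type*} [CommGroup G] {H : Subgroup G}

theorem lcm_orderOf_card_eq_card [Finite G] [IsCyclic G] {x : G}
    (hx : zpowers (x : G ⧸ H) = ⊤) : Nat.lcm (orderOf x) (Nat.card H) = Nat.card G := by
  refine Nat.dvd_antisymm (Nat.lcm_dvd (orderOf_dvd_natCard x) (card_subgroup_dvd_card H)) ?_
  rw [← IsCyclic.exponent_eq_card]
  refine Monoid.exponent_dvd_of_forall_pow_eq_one fun z => ?_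
  obtain ⟨k, hk⟩ := mem_zpowers_iff.mp (hx ▸ mem_top (z : G ⧸ H))
  obtain ⟨c, hc, rfl⟩ : ∃ c ∈ H, z = x ^ k * c :=
    ⟨_, QuotientGroup.eq.mp (by rw [QuotientGroup.mk_zpow, hk]), (mul_inv_cancel_left _ _).symm⟩
  rw [mul_pow, ← zpow_natCast, ← zpow_mul, mul_comm k, zpow_mul, zpow_natCast,
    orderOf_dvd_iff_pow_eq_one.mp (Nat.dvd_lcm_left _ _), one_zpow, one_mul]
  exact orderOf_dvd_iff_pow_eq_one.mp ((H.orderOf_dvd_natCard hc).trans (Nat.dvd_lcm_right _ _))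

theorem exists_mk_pow_eq {v : ℕ} (hv : v.Coprime H.index) (x : G) :
    ∃ y : G, ((y ^ v : G) : G ⧸ H) = x := by
  obtain ⟨m, hm⟩ := exists_pow_eq_self_of_coprime
    (hv.coprime_dvd_right (orderOf_dvd_natCard (x : G ⧸ H)))
  exact ⟨x ^ m, by
    rw [← pow_mul, mul_comm, pow_mul, QuotientGroup.mk_pow, QuotientGroup.mk_pow, hm]⟩

theorem card_coset_pow_eq_one {h₀ : G} {n : ℕ} (h₀n : h₀ ^ n = 1) :
    Nat.card {h : G // (h : G ⧸ H) = h₀ ∧ h ^ n = 1} = Nat.card {c : H // c ^ n = 1} := by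
  symm
  refine Nat.card_congr (((Equiv.subtypeEquivRight fun c => ?_).trans
    (Equiv.subtypeSubtypeEquivSubtypeInter (· ∈ H) (· ^ n = 1))).trans
    ((Equiv.mulLeft h₀).subtypeEquiv fun c => ?_))
  · norm_cast
  · simp [mul_pow, h₀n]

end Coset

/-- Let `Ci ≤ Cj` be cyclic of orders `i ∣ j`, write `i = u*v` with `v` the largest
divisor of `i` coprime to `j/i`. For each divisor `d` of `v`, the number of elements
of order `(j/v)·d` in any fixed generating coset of `Cj/Ci` is `u·φ(d)`. -/
theorem stmt8 {Cj : Type*} [CommGroup Cj] [Finite Cj] [IsCyclic Cj]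
    (j i u v : ℕ) (hj : Nat.card Cj = j) (Ci : Subgroup Cj) (hi : Nat.card Ci = i)
    (hij : i ∣ j) (huv : i = u * v) (hv : v ∣ i) (hvcop : Nat.Coprime v (j / i))
    (hvmax : ∀ w : ℕ, w ∣ i → Nat.Coprime w (j / i) → w ∣ v)
    (d : ℕ) (hd : d ∣ v)
    (x : Cj) (hgen : Subgroup.zpowers (QuotientGroup.mk x : Cj ⧸ Ci) = ⊤) :
    Nat.card {h : Cj //
        (QuotientGroup.mk h : Cj ⧸ Ci) = QuotientGroup.mk x ∧
        orderOf h = (j / v) * d} = u * Nat.totient d := by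
  have hi0 : 0 < i := hi ▸ Nat.card_pos
  have hv0 : v ≠ 0 := ne_zero_of_dvd_ne_zero hi0.ne' hv
  have hjv : j / v = j / i * u := by
    rw [Nat.div_eq_iff_eq_mul_left (Nat.pos_of_ne_zero hv0) (hv.trans hij), mul_assoc, ← huv,
      Nat.div_mul_cancel hij]
  have horder : ∀ h : Cj, (h : Cj ⧸ Ci) = x → j / v ∣ orderOf h := fun h hh =>
    div_dvd_of_lcm_eq (orderOf_pos h) hi0 (hj ▸ hi ▸ lcm_orderOf_card_eq_card (hh ▸ hgen)) hv hvmax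
  have hindex : Ci.index = j / i := by
    rw [← hj, ← Ci.card_mul_index, hi, Nat.mul_div_cancel_left _ hi0]
  obtain ⟨y, hy⟩ := exists_mk_pow_eq (hindex ▸ hvcop) x
  have hyv : (y ^ v) ^ (j / v) = 1 := by
    rw [← pow_mul, Nat.mul_div_cancel' (hv.trans hij), ← hj, pow_card_eq_one']
  refine eq_of_forall_sum_divisors_eq
    (f := fun e => Nat.card {h : Cj // (h : Cj ⧸ Ci) = x ∧ orderOf h = j / v * e})
    (g := fun e => u * e.totient) hv0 (fun e he => ?_) hd
  rw [← card_pow_eq_one_eq_sum_divisors _ (ne_zero_of_dvd_ne_zero hv0 he) horder, ← hy,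
    card_coset_pow_eq_one (by rw [pow_mul, hyv, one_pow]), IsCyclic.card_pow_eq_one, hi,
    ← mul_sum, Nat.sum_totient, hjv]
  exact gcd_mul_mul_eq_of_coprime huv hvcop he
end

section
/- In a cyclic group C_j of order j with subgroup C_i of order i (i | j), the number of elements of order k in each generating coset of C_j/C_i is φ(k)/φ(j/i), provided lcm(i,k) = j. -/
/-!
Since `lcm(|H|, k) = |G|`, every element of order `k` of the cyclic group `G` maps to a
generator of `G ⧸ H`. For `u` prime to `|G|`, `g ↦ g ^ u` is an automorphism of `G` preserving
orders and carrying the fibre over `q` onto the fibre over `q ^ u`; any generator of `G ⧸ H` is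
such a power of any other, so the `φ(|G ⧸ H|)` fibres over generators all have the same size, and
together they contain the `φ(k)` elements of order `k`.
-/

open Finset

theorem exists_coprime_pow_eq_of_orderOf_eq {Q : Type*} [Group Q] {q q' : Q}
    (hq' : q' ∈ Subgroup.zpowers q) (hord : orderOf q' = orderOf q) {n : ℕ} [NeZero n]
    (hn : orderOf q ∣ n) : ∃ u, n.Coprime u ∧ q ^ u = q' := by
  have hq : 0 < orderOf q :=
    Nat.pos_of_ne_zero fun h => NeZero.ne n (Nat.eq_zero_of_zero_dvd (h ▸ hn))
  have hfin : IsOfFinOrder q := orderOf_pos_iff.mp hq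
  obtain ⟨t, rfl⟩ := hfin.mem_powers_iff_mem_zpowers.mpr hq'
  have ht : t.Coprime (orderOf q) := by
    rw [hfin.orderOf_pow, Nat.div_eq_self] at hord
    exact Nat.coprime_comm.mp (hord.resolve_left hq.ne')
  -- `t` is a unit mod `orderOf q`, and units mod `orderOf q` lift to units mod `n`.
  obtain ⟨U, hU⟩ := ZMod.unitsMap_surjective hn (ZMod.unitOfCoprime t ht)
  refine ⟨(U : ZMod n).val, (ZMod.val_coe_unit_coprime U).symm, ?_⟩
  rw [pow_eq_pow_iff_modEq, ← ZMod.natCast_eq_natCast_iff]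
  simpa [ZMod.unitsMap] using congrArg Units.val hU

namespace QuotientGroup

variable {G : Type*}

theorem orderOf_dvd_card_mul_orderOf_mk [Group G] (H : Subgroup G) [H.Normal] (g : G) :
    orderOf g ∣ Nat.card H * orderOf (g : G ⧸ H) := by
  have hmem : g ^ orderOf (g : G ⧸ H) ∈ H := by
    rw [← eq_one_iff, mk_pow, pow_orderOf_eq_one]
  apply orderOf_dvd_of_pow_eq_one
  rw [mul_comm, pow_mul]
  exact congrArg Subtype.val (pow_card_eq_one' (x := (⟨_, hmem⟩ : H)))

theorem orderOf_mk_eq_card_of_lcm_eq [Group G] [Finite G] (H : Subgroup G) [H.Normal] {g : G}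
    (hg : Nat.lcm (Nat.card H) (orderOf g) = Nat.card G) :
    orderOf (g : G ⧸ H) = Nat.card (G ⧸ H) := by
  refine Nat.dvd_antisymm (orderOf_dvd_natCard _)
    (Nat.dvd_of_mul_dvd_mul_left (Nat.card_pos (α := H)) ?_)
  rw [mul_comm, ← H.card_eq_card_quotient_mul_card_subgroup, ← hg]
  exact Nat.lcm_dvd (dvd_mul_right _ _) (orderOf_dvd_card_mul_orderOf_mk H g)

theorem card_fiber_orderOf_pow_eq [CommGroup G] (H : Subgroup G) {u : ℕ}
    (hu : (Nat.card G).Coprime u) (q : G ⧸ H) (k : ℕ) :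
    Nat.card {g : G // (g : G ⧸ H) = q ^ u ∧ orderOf g = k} =
      Nat.card {g : G // (g : G ⧸ H) = q ∧ orderOf g = k} := by
  have huQ : (Nat.card (G ⧸ H)).Coprime u := hu.coprime_dvd_left H.card_quotient_dvd_card
  refine (Nat.card_congr (Equiv.subtypeEquiv (powCoprime hu) fun g => ?_)).symm
  rw [powCoprime_apply, mk_pow, huQ.pow_left_bijective.injective.eq_iff,
    Nat.Coprime.orderOf_pow (hu.coprime_dvd_left (orderOf_dvd_natCard g))]

theorem card_fiber_eq_of_zpowers_eq_top [CommGroup G] [Finite G] (H : Subgroup G) (k : ℕ)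
    {x : G} (hx : Subgroup.zpowers (x : G ⧸ H) = ⊤) {q : G ⧸ H}
    (hq : orderOf q = Nat.card (G ⧸ H)) :
    Nat.card {g : G // (g : G ⧸ H) = q ∧ orderOf g = k} =
      Nat.card {g : G // (g : G ⧸ H) = x ∧ orderOf g = k} := by
  have : NeZero (Nat.card G) := ⟨Nat.card_pos.ne'⟩
  have hxq : orderOf q = orderOf (x : G ⧸ H) :=
    hq.trans (orderOf_eq_card_of_zpowers_eq_top hx).symm
  obtain ⟨u, hu, rfl⟩ := exists_coprime_pow_eq_of_orderOf_eq (hx ▸ Subgroup.mem_top q) hxq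
    (orderOf_dvd_natCard _ |>.trans H.card_quotient_dvd_card)
  exact card_fiber_orderOf_pow_eq H hu _ k

end QuotientGroup

theorem IsCyclic.totient_eq_totient_mul_card_fiber {G : Type*} [CommGroup G] [Finite G]
    [IsCyclic G] (H : Subgroup G) {k : ℕ} (hk : Nat.lcm (Nat.card H) k = Nat.card G) {x : G}
    (hx : Subgroup.zpowers (x : G ⧸ H) = ⊤) :
    k.totient = (Nat.card (G ⧸ H)).totient *
      Nat.card {g : G // (g : G ⧸ H) = x ∧ orderOf g = k} := by
  classical
  have := Fintype.ofFinite G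
  have := Fintype.ofFinite (G ⧸ H)
  have : IsCyclic (G ⧸ H) := isCyclic_iff_exists_zpowers_eq_top.mpr ⟨_, hx⟩
  set d := Nat.card (G ⧸ H)
  have hcard : ∀ q : G ⧸ H, Nat.card {g : G // (g : G ⧸ H) = q ∧ orderOf g = k} =
      #{g : G | orderOf g = k ∧ (g : G ⧸ H) = q} := fun q => by
    rw [Nat.card_eq_fintype_card, Fintype.card_subtype]
    simp only [and_comm]
  have hmaps : ∀ g : G, orderOf g = k → orderOf (g : G ⧸ H) = d := fun g hg =>
    QuotientGroup.orderOf_mk_eq_card_of_lcm_eq H (hg ▸ hk)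
  have hkG : k ∣ Fintype.card G :=
    Nat.card_eq_fintype_card (α := G) ▸ hk ▸ Nat.dvd_lcm_right _ _
  calc k.totient = #{g : G | orderOf g = k} := (IsCyclic.card_orderOf_eq_totient hkG).symm
    _ = ∑ q : G ⧸ H with orderOf q = d, #{g : G | orderOf g = k ∧ (g : G ⧸ H) = q} := by
        rw [card_eq_sum_card_fiberwise (f := ((↑) : G → G ⧸ H)) (t := {q | orderOf q = d})
          fun g hg => (mem_filter_univ _).mpr (hmaps g ((mem_filter_univ g).mp hg))]
        simp only [filter_filter]
    _ = ∑ q : G ⧸ H with orderOf q = d,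
          Nat.card {g : G // (g : G ⧸ H) = x ∧ orderOf g = k} := by
        refine sum_congr rfl fun q hq => ?_
        rw [← hcard,
          QuotientGroup.card_fiber_eq_of_zpowers_eq_top H k hx ((mem_filter_univ q).mp hq)]
    _ = _ := by
        rw [sum_const, smul_eq_mul,
          IsCyclic.card_orderOf_eq_totient (Nat.card_eq_fintype_card (α := G ⧸ H) ▸ dvd_rfl)]

theorem stmt10_general {Cj : Type*} [CommGroup Cj] [Finite Cj] [IsCyclic Cj]
    (j i k : ℕ) (hj : Nat.card Cj = j) (Ci : Subgroup Cj) (hi : Nat.card Ci = i)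
    (hk : Nat.lcm i k = j)
    (x : Cj) (hgen : Subgroup.zpowers (QuotientGroup.mk x : Cj ⧸ Ci) = ⊤) :
    (Nat.card {h : Cj //
        (QuotientGroup.mk h : Cj ⧸ Ci) = QuotientGroup.mk x ∧ orderOf h = k} : ℚ) =
      (Nat.totient k : ℚ) / (Nat.totient (j / i) : ℚ) := by
  have hquot : Nat.card (Cj ⧸ Ci) = j / i := by
    rw [← hj, ← hi, Ci.card_eq_card_quotient_mul_card_subgroup,
      Nat.mul_div_cancel _ Nat.card_pos]
  have htot : ((Nat.card (Cj ⧸ Ci)).totient : ℚ) ≠ 0 := by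
    exact_mod_cast (Nat.totient_pos.mpr Nat.card_pos).ne'
  rw [IsCyclic.totient_eq_totient_mul_card_fiber Ci (hi ▸ hj ▸ hk) hgen, ← hquot,
    Nat.cast_mul, mul_div_cancel_left₀ _ htot]

/-- In a cyclic group `Cj` of order `j` with subgroup `Ci` of order `i ∣ j`, if
`lcm(i,k) = j` then the number of elements of order `k` in each generating coset of
`Cj/Ci` is `φ(k)/φ(j/i)`. -/
theorem stmt10 {Cj : Type*} [CommGroup Cj] [Finite Cj] [IsCyclic Cj]
    (j i k : ℕ) (hj : Nat.card Cj = j) (Ci : Subgroup Cj) (hi : Nat.card Ci = i)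
    (hij : i ∣ j) (hk : Nat.lcm i k = j)
    (x : Cj) (hgen : Subgroup.zpowers (QuotientGroup.mk x : Cj ⧸ Ci) = ⊤) :
    (Nat.card {h : Cj //
        (QuotientGroup.mk h : Cj ⧸ Ci) = QuotientGroup.mk x ∧ orderOf h = k} : ℚ) =
      (Nat.totient k : ℚ) / (Nat.totient (j / i) : ℚ) :=
  stmt10_general j i k hj Ci hi hk x hgen
end

section
/- Let n be a positive integer and consider the square matrix L indexed by pairs (i,j) with j | n and i | j, whose entry in row (i,j) and column (d,c) is φ(d)·n/lcm(j,c) if d | i, d | c and j | lcm(i,c), and 0 otherwise. Then det L = ∏_{(i,j)} φ(i)·n/j; in particular L is invertible. -/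
/-!
Order the pairs `(i, j)` by `i` decreasing and then by `j` increasing. A nonzero entry in row
`(i, j)` and column `(d, c)` needs `d ∣ i`, so `d ≤ i`; and if `d = i` then `i ∣ c`, so
`lcm(i, c) = c` and `j ∣ c`. Hence `L` is upper triangular for this order, and its determinant is
the product of the diagonal entries `φ(i)·n/lcm(j, j) = φ(i)·n/j`, none of which vanishes.
-/

/-- The index set of pairs `(i,j)` with `j ∣ n` and `i ∣ j`. -/
def pairIndex (n : ℕ) : Finset (ℕ × ℕ) :=
  (n.divisors ×ˢ n.divisors).filter (fun p => p.1 ∣ p.2)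

/-- The matrix `L` of the paper, with rows and columns indexed by pairs `(i,j)`
with `j ∣ n`, `i ∣ j`; the entry in row `(i,j)`, column `(d,c)` is
`φ(d)·n/lcm(j,c)` if `d ∣ i`, `d ∣ c` and `j ∣ lcm(i,c)`, and `0` otherwise. -/
noncomputable def Lmat (n : ℕ) : Matrix (pairIndex n) (pairIndex n) ℚ :=
  fun r c =>
    if (c.1.1 ∣ r.1.1) ∧ (c.1.1 ∣ c.1.2) ∧ (r.1.2 ∣ Nat.lcm r.1.1 c.1.2) then
      (Nat.totient c.1.1 : ℚ) * n / (Nat.lcm r.1.2 c.1.2 : ℚ)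
    else 0

theorem Matrix.det_of_blockTriangular_of_injective {m α R : Type*} [Fintype m] [DecidableEq m]
    [CommRing R] [LinearOrder α] {M : Matrix m m R} {b : m → α} (hb : Function.Injective b)
    (hM : M.BlockTriangular b) : M.det = ∏ i, M i i :=
  letI : LinearOrder m := LinearOrder.lift' b hb
  Matrix.det_of_isUpperTriangular hM

lemma mem_pairIndex {n : ℕ} {p : ℕ × ℕ} : p ∈ pairIndex n ↔ p.1 ∣ p.2 ∧ p.2 ∣ n ∧ n ≠ 0 := by
  simp only [pairIndex, Finset.mem_filter, Finset.mem_product, Nat.mem_divisors]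
  constructor
  · rintro ⟨⟨-, hjn, hn⟩, hij⟩
    exact ⟨hij, hjn, hn⟩
  · rintro ⟨hij, hjn, hn⟩
    exact ⟨⟨⟨hij.trans hjn, hn⟩, hjn, hn⟩, hij⟩

lemma pos_of_mem_pairIndex {n : ℕ} {p : ℕ × ℕ} (hp : p ∈ pairIndex n) :
    0 < p.1 ∧ 0 < p.2 ∧ 0 < n := by
  obtain ⟨hij, hjn, hn⟩ := mem_pairIndex.mp hp
  have hj := Nat.pos_of_dvd_of_pos hjn (Nat.pos_of_ne_zero hn)
  exact ⟨Nat.pos_of_dvd_of_pos hij hj, hj, Nat.pos_of_ne_zero hn⟩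

lemma Lmat_apply_self {n : ℕ} (p : pairIndex n) :
    Lmat n p p = (Nat.totient p.1.1 : ℚ) * n / (p.1.2 : ℚ) := by
  have hij := (mem_pairIndex.mp p.2).1
  rw [Lmat, if_pos ⟨dvd_rfl, hij, Nat.dvd_lcm_right _ _⟩, Nat.lcm_self]

lemma le_of_Lmat_apply_ne_zero {n : ℕ} {r c : pairIndex n} (h : Lmat n r c ≠ 0) :
    c.1.1 ≤ r.1.1 ∧ (r.1.1 = c.1.1 → r.1.2 ≤ c.1.2) := by
  obtain ⟨hdi, hdc, hjl⟩ : c.1.1 ∣ r.1.1 ∧ c.1.1 ∣ c.1.2 ∧ r.1.2 ∣ Nat.lcm r.1.1 c.1.2 := by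
    by_contra hne
    exact h (if_neg hne)
  obtain ⟨hi, -, -⟩ := pos_of_mem_pairIndex r.2
  obtain ⟨-, hc, -⟩ := pos_of_mem_pairIndex c.2
  refine ⟨Nat.le_of_dvd hi hdi, fun hid => Nat.le_of_dvd hc ?_⟩
  rwa [hid, Nat.lcm_eq_right hdc] at hjl

lemma Lmat_blockTriangular (n : ℕ) :
    (Lmat n).BlockTriangular fun p : pairIndex n => toLex (OrderDual.toDual p.1.1, p.1.2) := by
  intro r c hlt
  by_contra h
  exact not_le_of_gt hlt (Prod.Lex.toLex_le_toLex'.mpr (le_of_Lmat_apply_ne_zero h))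

theorem stmt12_general (n : ℕ) :
    ((Lmat n).det = ∏ p : pairIndex n, (Nat.totient p.1.1 : ℚ) * n / (p.1.2 : ℚ)) ∧
    IsUnit (Lmat n).det := by
  have hdet : (Lmat n).det = ∏ p : pairIndex n, (Nat.totient p.1.1 : ℚ) * n / (p.1.2 : ℚ) := by
    have hinj : Function.Injective fun p : pairIndex n => toLex (OrderDual.toDual p.1.1, p.1.2) :=
      fun p q h => Subtype.ext (Prod.ext (congrArg (·.1) h) (congrArg (·.2) h))
    rw [Matrix.det_of_blockTriangular_of_injective hinj (Lmat_blockTriangular n)]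
    exact Finset.prod_congr rfl fun p _ => Lmat_apply_self p
  refine ⟨hdet, hdet ▸ isUnit_iff_ne_zero.mpr (Finset.prod_ne_zero_iff.mpr fun p _ => ?_)⟩
  obtain ⟨hi, hj, hn⟩ := pos_of_mem_pairIndex p.2
  have := Nat.totient_pos.mpr hi
  positivity

/-- `det L = ∏_{(i,j)} φ(i)·n/j`; in particular `L` is invertible. -/
theorem stmt12 (n : ℕ) (hn : 0 < n) :
    ((Lmat n).det = ∏ p : pairIndex n, (Nat.totient p.1.1 : ℚ) * n / (p.1.2 : ℚ)) ∧
    IsUnit (Lmat n).det :=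
  stmt12_general n
end

section
/- With notation as in the paper: S*_d = n·∑_{c|n} ∑_{a|c} ∑_{b|c} (μ(c/a)μ(c/b)/φ(c))·(gcd(a,d)/lcm(a,d))·S_b, where S*_d is the number of conjugacy classes of K_d under its own action and S_b is the number of G-conjugacy classes contained in K_b. -/
/-!
Both sides count commuting pairs. By Burnside's lemma for the conjugation action, `|K_d| S*_d` is
the number of commuting pairs in `K_d × K_d` and `|G| S_b` the number of commuting pairs `(x, y)`
of `G` with `x ∈ K_b`. Fibre the commuting pairs over the cosets `(xH, yH)` in the cyclic group
`G/H = ⟨w⟩` of order `n`: the number lying over `(w^i, w^j)` is invariant under the Euclidean moves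
`(s, t) ↦ (s, t s^k)` and `(s, t) ↦ (t, s)`, so it depends only on `gcd(n, i, j)`. Möbius inversion
over the divisors of `n` then writes every such count as `∑_{e ∣ n} σ(e) gcd(u, e) gcd(v, e)`,
where `u, v` are the indices over `H` of the two subgroups, `(d, d)` for `S*_d` and `(b, n)` for
`S_b`. The right-hand side collapses to `(1/d) ∑_e σ(e) gcd(d, e)²` by
`∑_{b ∣ c} μ(c/b) gcd(b, e) = [c ∣ e] φ(c)`, by Möbius inversion of `a ↦ gcd(a, d)/lcm(a, d)`, and
by `e gcd(e, d)/lcm(e, d) = gcd(e, d)²/d`.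
-/

open Finset ArithmeticFunction

namespace Nat

theorem card_filter_range_dvd {n m : ℕ} (hm : m ∣ n) : #{i ∈ range n | m ∣ i} = n / m := by
  obtain ⟨k, rfl⟩ := hm
  rcases m.eq_zero_or_pos with rfl | hm
  · simp
  have hmap : {i ∈ range (m * k) | m ∣ i} =
      (range k).map ⟨(m * ·), mul_right_injective₀ hm.ne'⟩ := by
    ext i
    simp only [mem_filter, mem_range, mem_map, Function.Embedding.coeFn_mk]
    constructor
    · rintro ⟨hi, j, rfl⟩
      exact ⟨j, Nat.lt_of_mul_lt_mul_left hi, rfl⟩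
    · rintro ⟨j, hj, rfl⟩
      exact ⟨Nat.mul_lt_mul_of_pos_left hj hm, dvd_mul_right m j⟩
  rw [hmap, card_map, card_range, Nat.mul_div_cancel_left _ hm]

theorem card_filter_range_dvd_mul {n g : ℕ} (hn : n ≠ 0) (hg : g ∣ n) :
    #{i ∈ range n | n ∣ i * g} = g := by
  have hg0 : 0 < g := pos_of_ne_zero (ne_zero_of_dvd_ne_zero hn hg)
  simp_rw [mul_comm _ g, ← Nat.div_dvd_iff_dvd_mul hg hg0]
  rw [card_filter_range_dvd (div_dvd_of_dvd hg), Nat.div_div_self hg hn]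

theorem dvd_mul_gcd_iff {n i u e : ℕ} : n ∣ i * u.gcd e ↔ n ∣ i * u ∧ n ∣ i * e := by
  rw [← Nat.gcd_mul_left, Nat.dvd_gcd_iff]

theorem sum_divisors_moebius_mul_gcd {c : ℕ} (hc : c ≠ 0) (e : ℕ) :
    ∑ b ∈ c.divisors, (moebius (c / b) : ℚ) * (b.gcd e : ℚ) =
      if c ∣ e then (c.totient : ℚ) else 0 := by
  have htot : ∀ m > 0, ∑ k ∈ m.divisors, (if k ∣ e then (k.totient : ℚ) else 0) = m.gcd e := by
    intro m hm
    have hfilter : {k ∈ m.divisors | k ∣ e} = (m.gcd e).divisors := by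
      ext k
      simp [Nat.dvd_gcd_iff, hm.ne']
    rw [← sum_filter, hfilter]
    exact_mod_cast sum_totient _
  rw [← (sum_eq_iff_sum_mul_moebius_eq.mp htot) c (pos_of_ne_zero hc),
    Nat.sum_divisorsAntidiagonal' (fun x y => (moebius x : ℚ) * (y.gcd e : ℚ))]

theorem sum_divisors_sum_divisors_moebius {e : ℕ} (he : e ≠ 0) (h : ℕ → ℚ) :
    ∑ c ∈ e.divisors, ∑ a ∈ c.divisors, (moebius (c / a) : ℚ) * h a = h e :=
  (sum_eq_iff_sum_mul_moebius_eq.mpr fun _ _ =>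
    Nat.sum_divisorsAntidiagonal' (fun x y => (moebius x : ℚ) * h y)) e (pos_of_ne_zero he)

theorem exists_sum_range_gcd_eq {n : ℕ} (hn : n ≠ 0) (f : ℕ → ℚ) :
    ∃ σ : ℕ → ℚ, ∀ u v, u ∣ n → v ∣ n →
      ∑ i ∈ range n, ∑ j ∈ range n,
          (if n ∣ i * u ∧ n ∣ j * v then f (n.gcd (i.gcd j)) else 0) =
        ∑ e ∈ n.divisors, σ e * u.gcd e * v.gcd e := by
  set τ : ℕ → ℚ := fun k => ∑ x ∈ k.divisorsAntidiagonal, (moebius x.1 : ℚ) * f x.2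
  have hτ : ∀ g > 0, ∑ k ∈ g.divisors, τ k = f g :=
    sum_eq_iff_sum_mul_moebius_eq.mpr fun _ _ => rfl
  -- a divisor `k = n / e` of `n` divides `i` iff `n ∣ i * e`
  have hf : ∀ i j, f (n.gcd (i.gcd j)) =
      ∑ e ∈ n.divisors, if n ∣ i * e ∧ n ∣ j * e then τ (n / e) else 0 := by
    intro i j
    have hfilter : {k ∈ n.divisors | k ∣ i ∧ k ∣ j} = (n.gcd (i.gcd j)).divisors := by
      ext k
      simp [Nat.dvd_gcd_iff, hn]
    rw [← hτ _ (Nat.gcd_pos_of_pos_left _ (pos_of_ne_zero hn)), ← hfilter, sum_filter,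
      ← sum_div_divisors]
    refine sum_congr rfl fun e he => ?_
    simp_rw [Nat.div_dvd_iff_dvd_mul (dvd_of_mem_divisors he) (pos_of_mem_divisors he),
      mul_comm e]
  refine ⟨fun e => τ (n / e), fun u v hu hv => ?_⟩
  calc _ = ∑ i ∈ range n, ∑ j ∈ range n, ∑ e ∈ n.divisors, τ (n / e) *
        ((if n ∣ i * u.gcd e then 1 else 0) * (if n ∣ j * v.gcd e then 1 else 0)) := by
        refine sum_congr rfl fun i _ => sum_congr rfl fun j _ => ?_
        rw [hf]
        by_cases hi : n ∣ i * u <;> by_cases hj : n ∣ j * v <;>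
          simp [hi, hj, dvd_mul_gcd_iff, ← ite_and, and_comm]
    _ = ∑ e ∈ n.divisors, τ (n / e) * ((∑ i ∈ range n, if n ∣ i * u.gcd e then 1 else 0) *
          (∑ j ∈ range n, if n ∣ j * v.gcd e then 1 else 0)) := by
        simp_rw [sum_mul_sum, mul_sum]
        exact (sum_congr rfl fun i _ => sum_comm).trans sum_comm
    _ = _ := by
        refine sum_congr rfl fun e he => ?_
        have he' := dvd_of_mem_divisors he
        simp only [sum_boole, card_filter_range_dvd_mul hn ((Nat.gcd_dvd_right _ _).trans he')]
        ring

theorem eq_mul_sum_moebius_gcd_div_lcm {n d : ℕ} (hn : n ≠ 0) (hd : d ∣ n) {m X : ℚ}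
    (hm : m ≠ 0) (σ S : ℕ → ℚ) (hX : m * d * X = ∑ e ∈ n.divisors, σ e * d.gcd e * d.gcd e)
    (hS : ∀ b, b ∣ n → m * n * S b = ∑ e ∈ n.divisors, σ e * b.gcd e * n.gcd e) :
    X = n * ∑ c ∈ n.divisors, ∑ a ∈ c.divisors, ∑ b ∈ c.divisors,
        ((moebius (c / a) : ℚ) * (moebius (c / b) : ℚ) / (c.totient : ℚ)) *
          ((a.gcd d : ℚ) / (a.lcm d : ℚ)) * S b := by
  set h : ℕ → ℚ := fun a => (a.gcd d : ℚ) / (a.lcm d : ℚ)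
  have hd0 : (d : ℚ) ≠ 0 := by exact_mod_cast ne_zero_of_dvd_ne_zero hn hd
  have hb : ∀ c ∈ n.divisors, ∑ b ∈ c.divisors, (moebius (c / b) : ℚ) * (m * n * S b) =
      c.totient * ∑ e ∈ n.divisors, if c ∣ e then σ e * e else 0 := by
    intro c hc
    calc _ = ∑ b ∈ c.divisors, ∑ e ∈ n.divisors,
          (moebius (c / b) : ℚ) * (σ e * b.gcd e * e) := by
          refine sum_congr rfl fun b hb => ?_
          rw [hS b ((dvd_of_mem_divisors hb).trans (dvd_of_mem_divisors hc)), mul_sum]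
          refine sum_congr rfl fun e he => ?_
          rw [Nat.gcd_eq_right (dvd_of_mem_divisors he)]
      _ = ∑ e ∈ n.divisors, σ e * e * ∑ b ∈ c.divisors, (moebius (c / b) : ℚ) * b.gcd e := by
          rw [sum_comm]
          simp_rw [mul_sum]
          exact sum_congr rfl fun e _ => sum_congr rfl fun b _ => by ring
      _ = _ := by
          simp_rw [sum_divisors_moebius_mul_gcd (pos_of_mem_divisors hc).ne', mul_sum]
          exact sum_congr rfl fun e _ => by split_ifs <;> ring
  have hc : ∀ c ∈ n.divisors, m * n * ∑ a ∈ c.divisors, ∑ b ∈ c.divisors,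
        ((moebius (c / a) : ℚ) * (moebius (c / b) : ℚ) / (c.totient : ℚ)) * h a * S b =
      (∑ a ∈ c.divisors, (moebius (c / a) : ℚ) * h a) *
        ∑ e ∈ n.divisors, if c ∣ e then σ e * e else 0 := by
    intro c hc
    have hφ : (c.totient : ℚ) ≠ 0 := by
      exact_mod_cast (totient_pos.mpr (pos_of_mem_divisors hc)).ne'
    rw [← mul_div_cancel_left₀ (∑ e ∈ n.divisors, if c ∣ e then σ e * e else 0) hφ, ← hb c hc,
      mul_div_assoc', sum_mul_sum, mul_sum, sum_div]
    refine sum_congr rfl fun a _ => ?_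
    rw [mul_sum, sum_div]
    exact sum_congr rfl fun b _ => by ring
  rw [← mul_right_inj' hm]
  calc m * X = (∑ e ∈ n.divisors, σ e * d.gcd e * d.gcd e) / d := by
        rw [← hX]
        field_simp
    _ = ∑ e ∈ n.divisors, σ e * e * h e := by
        rw [sum_div]
        refine sum_congr rfl fun e he => ?_
        have hgl : (e.gcd d : ℚ) * e.lcm d = e * d := by exact_mod_cast gcd_mul_lcm e d
        have hl : (e.lcm d : ℚ) ≠ 0 := by
          exact_mod_cast lcm_ne_zero (pos_of_mem_divisors he).ne' (ne_zero_of_dvd_ne_zero hn hd)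
        simp only [h, Nat.gcd_comm d e]
        field_simp
        linear_combination σ e * e.gcd d * hgl
    _ = ∑ e ∈ n.divisors, σ e * e *
          ∑ c ∈ e.divisors, ∑ a ∈ c.divisors, (moebius (c / a) : ℚ) * h a := by
        refine sum_congr rfl fun e he => ?_
        rw [sum_divisors_sum_divisors_moebius (pos_of_mem_divisors he).ne']
    _ = _ := by
        rw [← mul_assoc, mul_sum, sum_congr rfl hc]
        simp_rw [mul_sum n.divisors]
        rw [sum_comm]
        refine sum_congr rfl fun e he => ?_
        rw [← divisors_filter_dvd_of_dvd hn (dvd_of_mem_divisors he), sum_filter, mul_sum]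
        exact sum_congr rfl fun c _ => by split_ifs <;> ring

end Nat

theorem IsCyclic.mem_iff_pow_card_eq_one {α : Type*} [Group α] [IsCyclic α] [Finite α]
    (Z : Subgroup α) {x : α} : x ∈ Z ↔ x ^ Nat.card Z = 1 := by
  classical
  have := Fintype.ofFinite α
  have hpow : ∀ y ∈ Z, y ^ Nat.card Z = 1 := fun y hy =>
    orderOf_dvd_iff_pow_eq_one.mp (Z.orderOf_dvd_natCard hy)
  refine ⟨hpow x, fun hx => ?_⟩
  have hsub : (Z : Set α).toFinset ⊆ ({y | y ^ Nat.card Z = 1} : Finset α) := fun y hy => by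
    rw [Set.mem_toFinset, SetLike.mem_coe] at hy
    simpa using hpow y hy
  have heq := eq_of_subset_of_card_le hsub (by
    rw [← Nat.card_eq_card_toFinset]
    exact IsCyclic.card_pow_eq_one_le Nat.card_pos)
  rw [← SetLike.mem_coe, ← Set.mem_toFinset, heq]
  simpa using hx

theorem IsCyclic.sum_univ_eq_sum_range_pow {α M : Type*} [Group α] [Fintype α]
    [AddCommMonoid M] {a : α} (ha : ∀ x, x ∈ Subgroup.zpowers a) (F : α → M) :
    ∑ x, F x = ∑ i ∈ range (orderOf a), F (a ^ i) := by
  classical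
  rw [← IsCyclic.image_range_orderOf ha, sum_image]
  intro i hi j hj hij
  exact pow_injOn_Iio_orderOf (by simpa using hi) (by simpa using hj) hij

section Subgroups

variable {G : Type*} [Group G]

theorem QuotientGroup.mem_iff_mk_pow_relIndex_eq_one {H K : Subgroup G} [H.Normal]
    [IsCyclic (G ⧸ H)] [Finite (G ⧸ H)] (hHK : H ≤ K) (x : G) :
    x ∈ K ↔ (x : G ⧸ H) ^ H.relIndex K = 1 := by
  have hK : K = (K.map (mk' H)).comap (mk' H) :=
    (Subgroup.comap_map_eq_self (by rwa [ker_mk'])).symm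
  have hcard : H.relIndex K = Nat.card (K.map (mk' H)) := by
    rw [← Subgroup.relIndex_ker, ker_mk']
  rw [hcard, ← IsCyclic.mem_iff_pow_card_eq_one]
  conv_lhs => rw [hK]
  rfl

theorem Subgroup.card_eq_card_mul_relIndex {H K : Subgroup G} (hHK : H ≤ K) :
    Nat.card K = Nat.card H * H.relIndex K := by
  rw [← relIndex_bot_left, ← relIndex_bot_left, relIndex_mul_relIndex _ _ _ bot_le hHK]

theorem Subgroup.normal_of_le_of_isMulCommutative_quotient {H K : Subgroup G} [H.Normal]
    [IsMulCommutative (G ⧸ H)] (hHK : H ≤ K) : K.Normal :=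
  .of_commutator_le G ((Normal.quotient_commutative_iff_commutator_le.mp inferInstance).trans hHK)

theorem Subgroup.card_conjClasses_mul_card (K : Subgroup G) :
    Nat.card (ConjClasses K) * Nat.card K =
      Nat.card {p : G × G // Commute p.1 p.2 ∧ p.1 ∈ K ∧ p.2 ∈ K} := by
  rw [← card_comm_eq_card_conjClasses_mul_card]
  exact Nat.card_congr
    { toFun := fun p => ⟨(p.1.1, p.1.2), congrArg Subtype.val p.2, p.1.1.2, p.1.2.2⟩
      invFun := fun p => ⟨(⟨p.1.1, p.2.2.1⟩, ⟨p.1.2, p.2.2.2⟩), Subtype.ext p.2.1⟩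
      left_inv := fun _ => rfl
      right_inv := fun _ => rfl }

theorem Subgroup.Normal.carrier_conjClassesMk_subset {K : Subgroup G} (hK : K.Normal) {x : G}
    (hx : x ∈ K) : (ConjClasses.mk x).carrier ⊆ K := by
  intro y hy
  obtain ⟨c, rfl⟩ := isConj_iff.mp (ConjClasses.mk_eq_mk_iff_isConj.mp
    (ConjClasses.mem_carrier_iff_mk_eq.mp hy)).symm
  exact hK.conj_mem x hx c

theorem ConjAct.toConjAct_smul_eq_self_iff {K : Subgroup G} [K.Normal] (g : G) (x : K) :
    toConjAct g • x = x ↔ Commute (x : G) g := by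
  rw [Subtype.ext_iff, ConjAct.Subgroup.val_conj_smul, ConjAct.toConjAct_smul,
    mul_inv_eq_iff_eq_mul, Commute, SemiconjBy, eq_comm]

open MulAction in
noncomputable def Subgroup.orbitRelConjActEquiv (K : Subgroup G) [hK : K.Normal] :
    Quotient (orbitRel (ConjAct G) K) ≃ {C : ConjClasses G // C.carrier ⊆ K} :=
  let classOf : K → {C : ConjClasses G // C.carrier ⊆ K} := fun x =>
    ⟨ConjClasses.mk x, hK.carrier_conjClassesMk_subset x.2⟩
  have hclassOf : Function.Surjective classOf := by
    rintro ⟨C, hC⟩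
    obtain ⟨y, rfl⟩ := ConjClasses.mk_surjective C
    exact ⟨⟨y, hC (ConjClasses.mem_carrier_iff_mk_eq.mpr rfl)⟩, rfl⟩
  have horbit : ∀ a b : K, orbitRel (ConjAct G) K a b ↔ Setoid.ker classOf a b := by
    intro a b
    rw [Setoid.ker_def, Subtype.ext_iff, ConjClasses.mk_eq_mk_iff_isConj, orbitRel_apply,
      mem_orbit_iff, isConj_comm, isConj_iff]
    exact ⟨fun ⟨g, hg⟩ => ⟨ConjAct.ofConjAct g, congrArg Subtype.val hg⟩,
      fun ⟨c, hc⟩ => ⟨ConjAct.toConjAct c, Subtype.ext hc⟩⟩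
  (Quotient.congrRight horbit).trans (Setoid.quotientKerEquivOfSurjective classOf hclassOf)

-- Burnside's lemma for `ConjAct G` acting on `K`.
open MulAction in
theorem Subgroup.card_commute_fst_mem [Finite G] (K : Subgroup G) [K.Normal] :
    Nat.card {p : G × G // Commute p.1 p.2 ∧ p.1 ∈ K} =
      Nat.card {C : ConjClasses G // C.carrier ⊆ K} * Nat.card G := by
  classical
  have := Fintype.ofFinite G
  let e : {p : G × G // Commute p.1 p.2 ∧ p.1 ∈ K} ≃ Σ g : ConjAct G, fixedBy K g :=
    { toFun := fun p => ⟨ConjAct.toConjAct p.1.2, ⟨p.1.1, p.2.2⟩,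
        (ConjAct.toConjAct_smul_eq_self_iff _ _).mpr p.2.1⟩
      invFun := fun q => ⟨(q.2.1, ConjAct.ofConjAct q.1),
        (ConjAct.toConjAct_smul_eq_self_iff _ _).mp q.2.2, q.2.1.2⟩
      left_inv := fun _ => rfl
      right_inv := fun _ => rfl }
  rw [Nat.card_congr e, ← Nat.card_congr (Subgroup.orbitRelConjActEquiv K),
    Nat.card_congr (ConjAct.toConjAct (G := G)).toEquiv]
  simp only [Nat.card_eq_fintype_card, Fintype.card_sigma]
  exact sum_card_fixedBy_eq_card_orbits_mul_card_group _ _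

end Subgroups

section CommutingPairs

variable {G Q : Type*} [Group G] [Group Q] (f : G →* Q)

noncomputable def commutingPairsOver (s t : Q) : ℕ :=
  Nat.card {p : G × G // Commute p.1 p.2 ∧ f p.1 = s ∧ f p.2 = t}

theorem commutingPairsOver_comm (s t : Q) :
    commutingPairsOver f s t = commutingPairsOver f t s :=
  Nat.card_congr <| (Equiv.prodComm G G).subtypeEquiv fun p => by
    simp only [Equiv.prodComm_apply, Prod.fst_swap, Prod.snd_swap, Commute.symm_iff]
    tauto

theorem commutingPairsOver_mul_pow (s t : Q) (k : ℕ) :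
    commutingPairsOver f s (t * s ^ k) = commutingPairsOver f s t := by
  refine Nat.card_congr ⟨fun p => ⟨(p.1.1, p.1.2 * (p.1.1 ^ k)⁻¹), ?_⟩,
    fun p => ⟨(p.1.1, p.1.2 * p.1.1 ^ k), ?_⟩, fun p => ?_, fun p => ?_⟩
  · obtain ⟨⟨x, y⟩, hxy, rfl, hy⟩ := p
    refine ⟨hxy.mul_right (Commute.pow_right (Commute.refl x) k).inv_right, rfl, ?_⟩
    simp_all
  · obtain ⟨⟨x, y⟩, hxy, rfl, rfl⟩ := p
    exact ⟨hxy.mul_right (Commute.pow_right (Commute.refl x) k), rfl, by simp⟩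
  · simp
  · simp

-- Euclid's algorithm on the exponents.
theorem commutingPairsOver_pow_pow (w : Q) (i j : ℕ) :
    commutingPairsOver f (w ^ i) (w ^ j) = commutingPairsOver f (w ^ i.gcd j) 1 := by
  induction i, j using Nat.gcd.induction with
  | H0 j => rw [commutingPairsOver_comm, Nat.gcd_zero_left, pow_zero]
  | H1 i j hi ih =>
    have hj : w ^ j = w ^ (j % i) * (w ^ i) ^ (j / i) := by
      rw [← pow_mul, ← pow_add, Nat.mod_add_div]
    rw [hj, commutingPairsOver_mul_pow, commutingPairsOver_comm, ih, Nat.gcd_rec i j]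

theorem commutingPairsOver_pow_pow_of_pow_eq_one {w : Q} {n : ℕ} (hw : w ^ n = 1) (i j : ℕ) :
    commutingPairsOver f (w ^ i) (w ^ j) = commutingPairsOver f (w ^ n.gcd (i.gcd j)) 1 := by
  calc _ = commutingPairsOver f (w ^ i.gcd j) (w ^ n) := by rw [commutingPairsOver_pow_pow, hw]
    _ = _ := by rw [commutingPairsOver_pow_pow, Nat.gcd_comm]

theorem card_commute_eq_sum_commutingPairsOver [Finite G] [Fintype Q] (P : Q → Q → Prop)
    [∀ s t, Decidable (P s t)] :
    Nat.card {p : G × G // Commute p.1 p.2 ∧ P (f p.1) (f p.2)} =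
      ∑ s, ∑ t, if P s t then commutingPairsOver f s t else 0 := by
  classical
  have := Fintype.ofFinite G
  simp only [commutingPairsOver, Nat.card_eq_fintype_card, Fintype.card_subtype]
  rw [card_eq_sum_card_fiberwise (f := fun p : G × G => (f p.1, f p.2)) (t := univ)
    fun _ _ => mem_univ _, Fintype.sum_prod_type]
  refine sum_congr rfl fun s _ => sum_congr rfl fun t _ => ?_
  rw [filter_filter]
  split_ifs with hst
  · congr 1
    ext p
    simp only [mem_filter, mem_univ, true_and, Prod.ext_iff]
    constructor
    · rintro ⟨⟨hc, -⟩, hs, ht⟩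
      exact ⟨hc, hs, ht⟩
    · rintro ⟨hc, rfl, rfl⟩
      exact ⟨⟨hc, hst⟩, rfl, rfl⟩
  · rw [card_eq_zero, filter_eq_empty_iff]
    rintro p - ⟨⟨-, hP⟩, hs⟩
    simp only [Prod.ext_iff] at hs
    exact hst (hs.1 ▸ hs.2 ▸ hP)

theorem card_commute_pow_eq_one [Finite G] [Fintype Q] {w : Q}
    (hw : ∀ x, x ∈ Subgroup.zpowers w) (u v : ℕ) :
    Nat.card {p : G × G // Commute p.1 p.2 ∧ f p.1 ^ u = 1 ∧ f p.2 ^ v = 1} =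
      ∑ i ∈ range (orderOf w), ∑ j ∈ range (orderOf w),
        if orderOf w ∣ i * u ∧ orderOf w ∣ j * v then
          commutingPairsOver f (w ^ (orderOf w).gcd (i.gcd j)) 1 else 0 := by
  classical
  rw [card_commute_eq_sum_commutingPairsOver f (fun s t => s ^ u = 1 ∧ t ^ v = 1),
    IsCyclic.sum_univ_eq_sum_range_pow hw]
  refine sum_congr rfl fun i _ => ?_
  rw [IsCyclic.sum_univ_eq_sum_range_pow hw]
  refine sum_congr rfl fun j _ => ?_
  simp only [← pow_mul, ← orderOf_dvd_iff_pow_eq_one,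
    commutingPairsOver_pow_pow_of_pow_eq_one f (pow_orderOf_eq_one w)]

end CommutingPairs

theorem exists_card_commute_mem_eq_sum_gcd {G : Type*} [Group G] [Finite G] (H : Subgroup G)
    [H.Normal] [IsCyclic (G ⧸ H)] :
    ∃ σ : ℕ → ℚ, ∀ A B : Subgroup G, H ≤ A → H ≤ B →
      (Nat.card {p : G × G // Commute p.1 p.2 ∧ p.1 ∈ A ∧ p.2 ∈ B} : ℚ) =
        ∑ e ∈ H.index.divisors, σ e * (H.relIndex A).gcd e * (H.relIndex B).gcd e := by
  classical
  have := Fintype.ofFinite (G ⧸ H)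
  obtain ⟨w, hw⟩ := IsCyclic.exists_generator (α := G ⧸ H)
  have hwn : orderOf w = H.index := orderOf_eq_card_of_forall_mem_zpowers hw
  obtain ⟨σ, hσ⟩ := Nat.exists_sum_range_gcd_eq H.index_ne_zero_of_finite
    fun g => (commutingPairsOver (QuotientGroup.mk' H) (w ^ g) 1 : ℚ)
  refine ⟨σ, fun A B hA hB => ?_⟩
  have hpow : Nat.card {p : G × G // Commute p.1 p.2 ∧ p.1 ∈ A ∧ p.2 ∈ B} =
      Nat.card {p : G × G // Commute p.1 p.2 ∧
        QuotientGroup.mk' H p.1 ^ H.relIndex A = 1 ∧ QuotientGroup.mk' H p.2 ^ H.relIndex B = 1} :=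
    Nat.card_congr <| Equiv.subtypeEquivRight fun p => by
      rw [QuotientGroup.mem_iff_mk_pow_relIndex_eq_one hA,
        QuotientGroup.mem_iff_mk_pow_relIndex_eq_one hB]
      rfl
  rw [← hσ _ _ (Subgroup.relIndex_dvd_index_of_le hA) (Subgroup.relIndex_dvd_index_of_le hB),
    hpow, card_commute_pow_eq_one _ hw, hwn]
  push_cast
  rfl

/-- `S*_d = n·∑_{c|n} ∑_{a|c} ∑_{b|c} (μ(c/a)μ(c/b)/φ(c))·(gcd(a,d)/lcm(a,d))·S_b`,
where `S*_d` is the number of conjugacy classes of `K d` under its own action and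
`S b` is the number of `G`-conjugacy classes contained in `K b`. -/
theorem stmt17 {G : Type*} [Group G] [Finite G] (H : Subgroup G) [H.Normal]
    (hcyc : IsCyclic (G ⧸ H)) (n : ℕ) (hn : Nat.card (G ⧸ H) = n)
    (K : ℕ → Subgroup G) (hK : ∀ d, d ∣ n → H ≤ K d ∧ H.relIndex (K d) = d)
    (S : ℕ → ℕ)
    (hS : ∀ b, b ∣ n →
      Nat.card {C : ConjClasses G // C.carrier ⊆ (K b : Set G)} = S b)
    (d : ℕ) (hd : d ∣ n) :
    (Nat.card (ConjClasses (K d)) : ℚ) =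
      (n : ℚ) * ∑ c ∈ n.divisors, ∑ a ∈ c.divisors, ∑ b ∈ c.divisors,
        ((ArithmeticFunction.moebius (c / a) : ℚ) *
            (ArithmeticFunction.moebius (c / b) : ℚ) / (Nat.totient c : ℚ)) *
          ((Nat.gcd a d : ℚ) / (Nat.lcm a d : ℚ)) * (S b : ℚ) := by
  have hindex : H.index = n := hn
  obtain ⟨σ, hσ⟩ := exists_card_commute_mem_eq_sum_gcd H
  rw [hindex] at hσ
  refine Nat.eq_mul_sum_moebius_gcd_div_lcm (hn ▸ Nat.card_pos.ne') hd (m := Nat.card H)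
    (by exact_mod_cast Nat.card_pos.ne') σ (fun b => S b) ?_ fun b hb => ?_
  · obtain ⟨hHK, hrel⟩ := hK d hd
    have hcount := hσ (K d) (K d) hHK hHK
    rw [hrel, ← Subgroup.card_conjClasses_mul_card, Subgroup.card_eq_card_mul_relIndex hHK,
      hrel] at hcount
    rw [← hcount]
    push_cast
    ring
  · obtain ⟨hHK, hrel⟩ := hK b hb
    have := Subgroup.normal_of_le_of_isMulCommutative_quotient hHK
    have hcount := hσ (K b) ⊤ hHK le_top
    simp only [Subgroup.mem_top, and_true, hrel, Subgroup.relIndex_top_right, hindex] at hcount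
    rw [← hcount, Subgroup.card_commute_fst_mem (K b), hS b hb, ← H.card_mul_index, hindex]
    push_cast
    ring
end

section
/- Let G be a finite group and H ⊴ G with G/H cyclic. For b | [G:H], S_d = ∑_{b|d} φ(b)·T_b, where S_d is the number of G-conjugacy classes in the subgroup K_d (H ≤ K_d, [K_d:H] = d) and T_b the number of G-conjugacy classes in any coset of H of order b in G/H; consequently φ(c)·T_c = ∑_{b|c} μ(c/b)·S_b. -/
open Finset

private def conjQuot {G : Type*} [Group G] (H : Subgroup G) [H.Normal]
    (hcomm : ∀ x y : G ⧸ H, x * y = y * x) : ConjClasses G → G ⧸ H :=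
  Quotient.lift (fun g => (g : G ⧸ H)) (fun a b h => by
    have h' : IsConj a b := h
    rw [isConj_iff] at h'
    obtain ⟨c, rfl⟩ := h'
    show (QuotientGroup.mk a : G ⧸ H) = QuotientGroup.mk (c * a * c⁻¹)
    rw [QuotientGroup.mk_mul, QuotientGroup.mk_mul, QuotientGroup.mk_inv,
      hcomm (QuotientGroup.mk c) (QuotientGroup.mk a), mul_assoc, mul_inv_cancel, mul_one])

private theorem conjQuot_mk {G : Type*} [Group G] (H : Subgroup G) [H.Normal]
    (hcomm : ∀ x y : G ⧸ H, x * y = y * x) (g : G) :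
    conjQuot H hcomm (ConjClasses.mk g) = (g : G ⧸ H) := by
  rw [← ConjClasses.quotient_mk_eq_mk]; rfl

/-- `S_d = ∑_{b|d} φ(b)·T_b`, where `S_d` counts the `G`-conjugacy classes in `K d`
and `T_b` counts the `G`-conjugacy classes in any coset of `H` of order `b` in
`G/H`; consequently `φ(c)·T_c = ∑_{b|c} μ(c/b)·S_b`. -/
theorem stmt18 {G : Type*} [Group G] [Finite G] (H : Subgroup G) [H.Normal]
    (hcyc : IsCyclic (G ⧸ H)) (n : ℕ) (hn : Nat.card (G ⧸ H) = n)
    (K : ℕ → Subgroup G) (hK : ∀ d, d ∣ n → H ≤ K d ∧ H.relIndex (K d) = d)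
    (T S : ℕ → ℕ)
    (hT : ∀ b, b ∣ n → ∀ x : G, orderOf (QuotientGroup.mk x : G ⧸ H) = b →
      Nat.card {C : ConjClasses G //
          C.carrier ⊆ {g : G | (QuotientGroup.mk g : G ⧸ H) = QuotientGroup.mk x}} = T b)
    (hS : ∀ d, d ∣ n →
      Nat.card {C : ConjClasses G // C.carrier ⊆ (K d : Set G)} = S d) :
    (∀ d, d ∣ n → S d = ∑ b ∈ d.divisors, Nat.totient b * T b) ∧
    (∀ c, c ∣ n → (Nat.totient c * T c : ℤ) =
      ∑ b ∈ c.divisors, ArithmeticFunction.moebius (c / b) * (S b : ℤ)) := by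
  classical
  haveI := hcyc
  have hcomm : ∀ x y : G ⧸ H, x * y = y * x := fun x y =>
    (IsCyclic.commGroup (α := G ⧸ H)).mul_comm x y
  set fq := conjQuot H hcomm with hfqdef
  have hfq_mk : ∀ g : G, fq (ConjClasses.mk g) = (g : G ⧸ H) := conjQuot_mk H hcomm
  have hn0 : n ≠ 0 := by
    rw [← hn]
    exact Nat.card_pos.ne'
  have := Fintype.ofFinite (G ⧸ H)
  have := Fintype.ofFinite (ConjClasses G)
  have key : ∀ d, d ∣ n → S d = ∑ b ∈ d.divisors, Nat.totient b * T b := by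
    intro d hd
    obtain ⟨hHK, hrel⟩ := hK d hd
    set Q : Subgroup (G ⧸ H) := (K d).map (QuotientGroup.mk' H) with hQdef
    have hcardQ : Nat.card Q = d := by
      set φ' : (K d) →* G ⧸ H := (QuotientGroup.mk' H).comp (K d).subtype with hφ'
      have hker : φ'.ker = H.subgroupOf (K d) := by
        rw [hφ', ← MonoidHom.comap_ker, QuotientGroup.ker_mk']
        rfl
      have hrange : φ'.range = Q := by
        rw [hφ', MonoidHom.range_comp, Subgroup.range_subtype]
      have h1 : Nat.card Q = Nat.card ((K d) ⧸ φ'.ker) := by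
        rw [← hrange]
        exact (Nat.card_congr (QuotientGroup.quotientKerEquivRange φ').toEquiv).symm
      rw [h1]
      have : Nat.card ((K d) ⧸ φ'.ker) = φ'.ker.index := rfl
      rw [this, hker]
      exact hrel
    have hmemQ : ∀ C : ConjClasses G, C.carrier ⊆ (K d : Set G) ↔ fq C ∈ Q := by
      intro C
      obtain ⟨g, rfl⟩ := ConjClasses.mk_surjective C
      rw [hfq_mk]
      constructor
      · intro hsub
        exact ⟨g, hsub ConjClasses.mem_carrier_mk, rfl⟩
      · rintro ⟨k, hk, hkg⟩
        intro a ha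
        rw [ConjClasses.mem_carrier_iff_mk_eq] at ha
        have h1 : (a : G ⧸ H) = (k : G ⧸ H) := by
          have h2 := congrArg fq ha
          rw [hfq_mk, hfq_mk] at h2
          rw [h2, ← hkg]
          rfl
        have h3 : a⁻¹ * k ∈ H := QuotientGroup.eq.mp h1
        have h4 : a = k * (a⁻¹ * k)⁻¹ := by group
        rw [SetLike.mem_coe, h4]
        exact mul_mem hk (inv_mem (hHK h3))
    have hmemFib : ∀ (C : ConjClasses G) (y : G ⧸ H),
        C.carrier ⊆ {g : G | (QuotientGroup.mk g : G ⧸ H) = y} ↔ fq C = y := by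
      intro C y
      obtain ⟨g, rfl⟩ := ConjClasses.mk_surjective C
      rw [hfq_mk]
      constructor
      · intro hsub
        exact hsub ConjClasses.mem_carrier_mk
      · intro h a ha
        rw [ConjClasses.mem_carrier_iff_mk_eq] at ha
        have h2 := congrArg fq ha
        rw [hfq_mk, hfq_mk] at h2
        show (a : G ⧸ H) = y
        rw [h2, h]
    have step1 : S d = ∑ q ∈ univ.filter (· ∈ Q), T (orderOf q) := by
      rw [← hS d hd]
      have e1 : Nat.card {C : ConjClasses G // C.carrier ⊆ (K d : Set G)}
          = (univ.filter fun C : ConjClasses G => fq C ∈ Q).card := by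
        rw [Nat.card_congr (Equiv.subtypeEquivRight hmemQ), Nat.card_eq_fintype_card,
          Fintype.card_subtype]
      rw [e1, card_eq_sum_card_fiberwise (f := fq) (t := univ.filter (· ∈ Q))
        (fun C hC => by rw [mem_coe, mem_filter] at hC ⊢; exact ⟨mem_univ _, hC.2⟩)]
      apply sum_congr rfl
      intro q hq
      rw [mem_filter] at hq
      obtain ⟨x, rfl⟩ := QuotientGroup.mk_surjective q
      have hb : orderOf (QuotientGroup.mk x : G ⧸ H) ∣ n := hn ▸ orderOf_dvd_natCard _
      have e2 : Nat.card {C : ConjClasses G //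
          C.carrier ⊆ {g : G | (QuotientGroup.mk g : G ⧸ H) = QuotientGroup.mk x}}
          = (univ.filter fun C : ConjClasses G => fq C = QuotientGroup.mk x).card := by
        rw [Nat.card_congr (Equiv.subtypeEquivRight fun C => hmemFib C _),
          Nat.card_eq_fintype_card, Fintype.card_subtype]
      rw [← hT _ hb x rfl, e2]
      congr 1
      ext C
      simp only [mem_filter, mem_univ, true_and]
      constructor
      · rintro ⟨-, h⟩; exact h
      · intro h; exact ⟨by rw [h]; exact hq.2, h⟩
    have hd0 : d ≠ 0 := fun h => hn0 (by subst h; exact Nat.eq_zero_of_zero_dvd hd)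
    have maps : ∀ q ∈ univ.filter (· ∈ Q), orderOf q ∈ d.divisors := by
      intro q hq
      rw [mem_filter] at hq
      rw [Nat.mem_divisors]
      refine ⟨?_, hd0⟩
      have := Subgroup.orderOf_dvd_natCard Q hq.2
      rwa [hcardQ] at this
    rw [step1, ← Finset.sum_fiberwise_of_maps_to maps (fun q => T (orderOf q))]
    apply sum_congr rfl
    intro b hb
    rw [Nat.mem_divisors] at hb
    rw [sum_congr rfl (fun q hq => by rw [(mem_filter.1 hq).2] :
        ∀ q ∈ (univ.filter (· ∈ Q)).filter (fun q => orderOf q = b),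
          T (orderOf q) = T b), sum_const, smul_eq_mul]
    congr 1
    have e3 : ((univ.filter (· ∈ Q)).filter fun q => orderOf q = b).card
        = (univ.filter fun q : Q => orderOf q = b).card := by
      rw [filter_filter, ← Fintype.card_subtype, ← Fintype.card_subtype]
      exact Fintype.card_congr
        (((Equiv.subtypeSubtypeEquivSubtypeInter (· ∈ Q) (fun q => orderOf q = b)).symm).trans
          (Equiv.subtypeEquivRight fun x => by rw [Subgroup.orderOf_coe]))
    rw [e3]
    have hbd : b ∣ Fintype.card Q := by
      rw [← Nat.card_eq_fintype_card, hcardQ]; exact hb.1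
    exact IsCyclic.card_orderOf_eq_totient hbd
  refine ⟨key, ?_⟩
  have hinv := (ArithmeticFunction.sum_eq_iff_sum_mul_moebius_eq_on (R := ℤ)
      (f := fun b => (Nat.totient b * T b : ℤ)) (g := fun d => (S d : ℤ))
      {m | m ∣ n} (fun m k hmk hk => hmk.trans hk)).mp ?_
  · intro c hc
    have hc0 : 0 < c := Nat.pos_of_ne_zero (fun h => hn0 (by subst h; exact Nat.eq_zero_of_zero_dvd hc))
    have h := hinv c hc0 hc
    simp only [Int.cast_id] at h
    rw [Nat.sum_divisorsAntidiagonal'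
      (f := fun a b => ArithmeticFunction.moebius a * (S b : ℤ))] at h
    exact h.symm
  · intro m _ hm
    have := key m hm
    push_cast [this]
    ring
end
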